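/- arXiv:2207.07383 — 9 statements merged into one kernel-verified Lean document; each statement's English description precedes it below -/
import Mathlib

section
/- For a nonzero vector a ∈ ℝⁿ and ω ≥ 0, if the soft-thresholded vector S(a,ω) (with entries sgn(a_i)·max(|a_i|−ω, 0)) is nonzero, then the maximum of ⟨a,x⟩ − ω‖x‖₁ over unit vectors x ∈ ℝⁿ equals ‖S(a,ω)‖₂ = sqrt(Σᵢ max(|a_i|−ω,0)²), attained at x* = S(a,ω)/‖S(a,ω)‖₂. -/
/-- Euclidean (ℓ2) norm of a finitely indexed real vector. -/
noncomputable def n2 {α : Type*} [Fintype α] (x : α → ℝ) : ℝ :=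
  Real.sqrt (∑ i, x i ^ 2)

/-- ℓ1 norm of a finitely indexed real vector. -/
noncomputable def n1 {α : Type*} [Fintype α] (x : α → ℝ) : ℝ :=
  ∑ i, |x i|

/-- Entrywise soft-thresholding operator `S(a, ω)ᵢ = sgn(aᵢ) · max(|aᵢ| − ω, 0)`. -/
noncomputable def st {α : Type*} [Fintype α] (a : α → ℝ) (ω : ℝ) : α → ℝ :=
  fun i => Real.sign (a i) * max (|a i| - ω) 0

theorem stmt0 {n : ℕ} (a : Fin n → ℝ) (ω : ℝ) (ha : a ≠ 0) (hω : 0 ≤ ω)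
    (hS : st a ω ≠ 0) :
    n2 (st a ω) = Real.sqrt (∑ i, max (|a i| - ω) 0 ^ 2) ∧
    IsGreatest {v : ℝ | ∃ x : Fin n → ℝ, n2 x = 1 ∧ v = (∑ i, a i * x i) - ω * n1 x}
      (n2 (st a ω)) ∧
    n2 (fun i => st a ω i / n2 (st a ω)) = 1 ∧
    (∑ i, a i * (st a ω i / n2 (st a ω))) -
        ω * n1 (fun i => st a ω i / n2 (st a ω)) = n2 (st a ω) := by
  set s := st a ω with hsdef
  set m : Fin n → ℝ := fun i => max (|a i| - ω) 0 with hmdef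
  have hm0 : ∀ i, 0 ≤ m i := fun i => le_max_right _ _
  have habs : ∀ i, |s i| = m i := by
    intro i
    rcases lt_trichotomy (a i) 0 with h | h | h
    · simp [hsdef, st, hmdef, Real.sign_of_neg h, abs_mul, abs_of_nonneg (hm0 i)]
    · have : max (|a i| - ω) 0 = 0 := by
        rw [h]; simp; linarith
      simp [hsdef, st, hmdef, this]
    · simp [hsdef, st, hmdef, Real.sign_of_pos h, abs_mul, abs_of_nonneg (hm0 i)]
  have hsq : ∀ i, s i ^ 2 = m i ^ 2 := by
    intro i; rw [← sq_abs, habs]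
  have hmul : ∀ i, a i * s i = |a i| * m i := by
    intro i
    rcases lt_trichotomy (a i) 0 with h | h | h
    · simp only [hsdef, st, hmdef, Real.sign_of_neg h]
      rw [abs_of_neg h]; ring
    · simp [hsdef, st, h]
    · simp only [hsdef, st, hmdef, Real.sign_of_pos h]
      rw [abs_of_pos h]; ring
  have hmm : ∀ i, (|a i| - ω) * m i = m i ^ 2 := by
    intro i
    rcases le_or_gt (|a i| - ω) 0 with h | h
    · have : m i = 0 := max_eq_right h
      simp [this]
    · have : m i = |a i| - ω := max_eq_left h.le
      rw [this]; ring
  -- first conjunct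
  have h1 : n2 s = Real.sqrt (∑ i, m i ^ 2) := by
    unfold n2
    congr 1
    exact Finset.sum_congr rfl fun i _ => hsq i
  have hsumnn : 0 ≤ ∑ i, m i ^ 2 := Finset.sum_nonneg fun i _ => sq_nonneg _
  have hN2 : n2 s ^ 2 = ∑ i, m i ^ 2 := by
    rw [h1, Real.sq_sqrt hsumnn]
  -- positivity of N
  have hNpos : 0 < n2 s := by
    obtain ⟨i, hi⟩ := Function.ne_iff.mp hS
    have hi' : s i ≠ 0 := by simpa using hi
    have hmi : 0 < m i ^ 2 := by
      have : 0 < |s i| := abs_pos.mpr hi'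
      rw [habs i] at this
      positivity
    have : 0 < ∑ i, m i ^ 2 :=
      lt_of_lt_of_le hmi (Finset.single_le_sum (fun j _ => sq_nonneg (m j)) (Finset.mem_univ i))
    rw [h1]
    exact Real.sqrt_pos.mpr this
  -- key sum identity
  have hkey : (∑ i, a i * s i) - ω * n1 s = n2 s ^ 2 := by
    have : (∑ i, a i * s i) - ω * n1 s = ∑ i, ((|a i| - ω) * m i) := by
      unfold n1
      rw [Finset.mul_sum, ← Finset.sum_sub_distrib]
      refine Finset.sum_congr rfl fun i _ => ?_
      rw [hmul i, habs i]; ring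
    rw [this, hN2]
    exact Finset.sum_congr rfl fun i _ => hmm i
  -- third conjunct
  have h3 : n2 (fun i => s i / n2 s) = 1 := by
    show Real.sqrt (∑ i, (s i / n2 s) ^ 2) = 1
    have e : ∑ i, (s i / n2 s) ^ 2 = (∑ i, s i ^ 2) / n2 s ^ 2 := by
      rw [Finset.sum_div]
      exact Finset.sum_congr rfl fun i _ => by ring
    rw [e]
    have hss : ∑ i, s i ^ 2 = n2 s ^ 2 := by
      rw [hN2]; exact Finset.sum_congr rfl fun i _ => hsq i
    rw [hss, div_self (by positivity), Real.sqrt_one]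
  -- fourth conjunct
  have h4 : (∑ i, a i * (s i / n2 s)) - ω * n1 (fun i => s i / n2 s) = n2 s := by
    have e1 : ∑ i, a i * (s i / n2 s) = (∑ i, a i * s i) / n2 s := by
      rw [Finset.sum_div]
      exact Finset.sum_congr rfl fun i _ => by ring
    have e2 : n1 (fun i => s i / n2 s) = n1 s / n2 s := by
      unfold n1
      rw [Finset.sum_div]
      refine Finset.sum_congr rfl fun i _ => ?_
      rw [abs_div, abs_of_pos hNpos]
    rw [e1, e2]
    have : (∑ i, a i * s i) / n2 s - ω * (n1 s / n2 s) = ((∑ i, a i * s i) - ω * n1 s) / n2 s := by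
      ring
    rw [this, hkey, sq, mul_div_assoc, div_self hNpos.ne', mul_one]
  refine ⟨h1, ⟨⟨fun i => s i / n2 s, h3, h4.symm⟩, ?_⟩, h3, h4⟩
  -- upper bound
  rintro v ⟨x, hx1, rfl⟩
  have hxsum : ∑ i, x i ^ 2 = 1 := by
    have : Real.sqrt (∑ i, x i ^ 2) = 1 := hx1
    have h0 : (0:ℝ) ≤ ∑ i, x i ^ 2 := Finset.sum_nonneg fun i _ => sq_nonneg _
    nlinarith [Real.sq_sqrt h0]
  have step1 : (∑ i, a i * x i) - ω * n1 x ≤ ∑ i, m i * |x i| := by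
    unfold n1
    rw [Finset.mul_sum, ← Finset.sum_sub_distrib]
    refine Finset.sum_le_sum fun i _ => ?_
    have h1' : a i * x i ≤ |a i| * |x i| := by
      calc a i * x i ≤ |a i * x i| := le_abs_self _
        _ = |a i| * |x i| := abs_mul _ _
    have h2' : (|a i| - ω) * |x i| ≤ m i * |x i| :=
      mul_le_mul_of_nonneg_right (le_max_left _ _) (abs_nonneg _)
    nlinarith
  have step2 : ∑ i, m i * |x i| ≤ n2 s := by
    have := Real.sum_mul_le_sqrt_mul_sqrt Finset.univ m (fun i => |x i|)
    have hxx : ∑ i, |x i| ^ 2 = 1 := by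
      rw [← hxsum]; exact Finset.sum_congr rfl fun i _ => sq_abs _
    rw [hxx, Real.sqrt_one, mul_one] at this
    calc ∑ i, m i * |x i| ≤ Real.sqrt (∑ i, m i ^ 2) := this
      _ = n2 s := h1.symm
  exact step1.trans step2
end

section
/- For a nonzero vector a ∈ ℝⁿ and ω ≥ 0, if S(a,ω) = 0 (i.e., |a_i| ≤ ω for all i), then the maximum of ⟨a,x⟩ − ω‖x‖₁ over unit vectors x ∈ ℝⁿ equals max_{1≤i≤n}|a_i| − ω, attained at x* = sgn(a_î)·e_î where î maximizes |a_i| (with sgn(0) interpreted as 1). -/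
theorem stmt1 {n : ℕ} (a : Fin n → ℝ) (ω : ℝ) (ha : a ≠ 0) (hω : 0 ≤ ω)
    (hS : st a ω = 0) (ihat : Fin n) (hihat : ∀ i, |a i| ≤ |a ihat|) :
    IsGreatest {v : ℝ | ∃ x : Fin n → ℝ, n2 x = 1 ∧ v = (∑ i, a i * x i) - ω * n1 x}
      (|a ihat| - ω) ∧
    n2 (fun i => if i = ihat then (if a ihat < 0 then (-1 : ℝ) else 1) else 0) = 1 ∧
    (∑ i, a i * (if i = ihat then (if a ihat < 0 then (-1 : ℝ) else 1) else 0)) -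
        ω * n1 (fun i => if i = ihat then (if a ihat < 0 then (-1 : ℝ) else 1) else 0)
      = |a ihat| - ω := by
  set c : ℝ := if a ihat < 0 then (-1 : ℝ) else 1 with hc
  have hc2 : c ^ 2 = 1 := by rw [hc]; split <;> norm_num
  have hcabs : |c| = 1 := by rw [hc]; split <;> norm_num
  have hac : a ihat * c = |a ihat| := by
    rw [hc]; split
    · rw [abs_of_neg ‹_›]; ring
    · rw [abs_of_nonneg (le_of_not_gt ‹_›)]; ring
  have haihat : a ihat ≠ 0 := by
    intro h
    apply ha
    funext i
    have := hihat i
    rw [h, abs_zero] at this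
    simpa using abs_nonpos_iff.mp this
  have hωle : |a ihat| ≤ ω := by
    have h0 := congrFun hS ihat
    simp only [st, Pi.zero_apply, mul_eq_zero] at h0
    rcases h0 with h0 | h0
    · exact absurd (Real.sign_eq_zero_iff.mp h0) haihat
    · have := max_eq_right_iff.mp h0
      linarith
  -- compute n2 of candidate
  have hsq : (∑ i, (if i = ihat then c else 0) ^ 2) = 1 := by
    rw [Finset.sum_eq_single ihat]
    · simpa using hc2
    · intro b _ hb; simp [hb]
    · simp
  have hn2 : n2 (fun i => if i = ihat then c else 0) = 1 := by
    simp only [n2]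
    rw [hsq, Real.sqrt_one]
  have hn1 : n1 (fun i => if i = ihat then c else 0) = 1 := by
    simp only [n1]
    rw [Finset.sum_eq_single ihat]
    · simpa using hcabs
    · intro b _ hb; simp [hb]
    · simp
  have hsum : (∑ i, a i * (if i = ihat then c else 0)) = |a ihat| := by
    rw [Finset.sum_eq_single ihat]
    · simpa using hac
    · intro b _ hb; simp [hb]
    · simp
  have hval : (∑ i, a i * (if i = ihat then c else 0)) -
      ω * n1 (fun i => if i = ihat then c else 0) = |a ihat| - ω := by
    rw [hsum, hn1, mul_one]
  refine ⟨⟨⟨fun i => if i = ihat then c else 0, hn2, hval.symm⟩, ?_⟩, hn2, hval⟩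
  rintro v ⟨x, hx2, rfl⟩
  have hn1x : 1 ≤ n1 x := by
    have hsq2 : (∑ i, x i ^ 2) ≤ (n1 x) ^ 2 := by
      have h1 : ∀ i ∈ Finset.univ, x i ^ 2 ≤ |x i| * n1 x := by
        intro i _
        have : |x i| ≤ n1 x := by
          apply Finset.single_le_sum (f := fun j => |x j|) (fun j _ => abs_nonneg _)
            (Finset.mem_univ i)
        calc x i ^ 2 = |x i| * |x i| := by rw [← sq_abs, sq]
          _ ≤ |x i| * n1 x := by
            exact mul_le_mul_of_nonneg_left this (abs_nonneg _)
      calc (∑ i, x i ^ 2) ≤ ∑ i, |x i| * n1 x := Finset.sum_le_sum h1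
        _ = (n1 x) ^ 2 := by rw [← Finset.sum_mul]; simp [n1]; ring
    have hn1nn : 0 ≤ n1 x := Finset.sum_nonneg fun i _ => abs_nonneg _
    have := Real.sqrt_le_sqrt hsq2
    rw [Real.sqrt_sq hn1nn] at this
    calc (1 : ℝ) = n2 x := hx2.symm
      _ ≤ n1 x := this
  have hsumle : (∑ i, a i * x i) ≤ |a ihat| * n1 x := by
    calc (∑ i, a i * x i) ≤ ∑ i, |a i * x i| :=
          Finset.sum_le_sum fun i _ => le_abs_self _
      _ ≤ ∑ i, |a ihat| * |x i| := by
          apply Finset.sum_le_sum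
          intro i _
          rw [abs_mul]
          exact mul_le_mul_of_nonneg_right (hihat i) (abs_nonneg _)
      _ = |a ihat| * n1 x := by rw [← Finset.mul_sum]; rfl
  have hnp : |a ihat| - ω ≤ 0 := by linarith
  calc (∑ i, a i * x i) - ω * n1 x ≤ (|a ihat| - ω) * n1 x := by linarith
    _ ≤ (|a ihat| - ω) * 1 := mul_le_mul_of_nonpos_left hn1x hnp
    _ = |a ihat| - ω := mul_one _
end

section
/- For any vector a ∈ ℝⁿ, ω ≥ 0, and any maximizer x* of ⟨a,x⟩ − ω‖x‖₁ over the unit sphere in ℝⁿ, one has ⟨a, x*⟩ = ⟨|a|, |x*|⟩, where |·| denotes the entrywise absolute value; consequently the maximum value equals max_{‖x‖₂=1} ⟨|a| − ω·e, |x|⟩ where e is the all-ones vector. -/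
theorem stmt2 {n : ℕ} (a : Fin n → ℝ) (ω : ℝ) (hω : 0 ≤ ω) (xs : Fin n → ℝ)
    (hxs : n2 xs = 1)
    (hmax : ∀ x : Fin n → ℝ, n2 x = 1 →
      (∑ i, a i * x i) - ω * n1 x ≤ (∑ i, a i * xs i) - ω * n1 xs) :
    (∑ i, a i * xs i) = ∑ i, |a i| * |xs i| ∧
    IsGreatest {v : ℝ | ∃ x : Fin n → ℝ, n2 x = 1 ∧ v = ∑ i, (|a i| - ω) * |x i|}
      ((∑ i, a i * xs i) - ω * n1 xs) := by
  have expand : ∀ x : Fin n → ℝ,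
      (∑ i, (|a i| - ω) * |x i|) = (∑ i, |a i| * |x i|) - ω * n1 x := by
    intro x
    simp only [n1, Finset.mul_sum, ← Finset.sum_sub_distrib]
    apply Finset.sum_congr rfl
    intro i _
    ring
  have aux : ∀ x : Fin n → ℝ, n2 x = 1 →
      (∑ i, (|a i| - ω) * |x i|) ≤ (∑ i, a i * xs i) - ω * n1 xs := by
    intro x hx
    set y : Fin n → ℝ := fun i => if 0 ≤ a i then |x i| else -|x i| with hy
    have hy2 : n2 y = 1 := by
      rw [← hx]
      unfold n2
      congr 1
      apply Finset.sum_congr rfl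
      intro i _
      by_cases h : 0 ≤ a i <;> simp [hy, h, sq_abs]
    have hy1 : n1 y = n1 x := by
      unfold n1
      apply Finset.sum_congr rfl
      intro i _
      by_cases h : 0 ≤ a i <;> simp [hy, h]
    have hkey : ∑ i, a i * y i = ∑ i, |a i| * |x i| := by
      apply Finset.sum_congr rfl
      intro i _
      by_cases h : 0 ≤ a i
      · simp [hy, h, abs_of_nonneg h]
      · push_neg at h
        simp only [hy, not_le.mpr h, if_false, abs_of_neg h]
        ring
    have h := hmax y hy2
    rw [hy1, hkey] at h
    rw [expand x]
    exact h
  have h1 : (∑ i, a i * xs i) = ∑ i, |a i| * |xs i| := by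
    have hle : (∑ i, a i * xs i) ≤ ∑ i, |a i| * |xs i| := by
      apply Finset.sum_le_sum
      intro i _
      rw [← abs_mul]
      exact le_abs_self _
    have hge := aux xs hxs
    rw [expand xs] at hge
    linarith
  refine ⟨h1, ⟨xs, hxs, ?_⟩, ?_⟩
  · rw [expand xs, h1]
  · rintro v ⟨x, hx, rfl⟩
    exact aux x hx
end

section
/- Let 0 < ω < 1/√n. Then the minimum of f(x) = Σᵢ₌₁ⁿ max(|x_i| − ω, 0)² over unit vectors x ∈ ℝⁿ is at least n·(1/√n − ω)². -/
lemma aux3 (s ω t : ℝ) (h1 : 0 < ω) (hω : ω < s) (ht : 0 ≤ t) :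
    (s - ω) ^ 2 + (1 - ω / s) * (t ^ 2 - s ^ 2) ≤ max (t - ω) 0 ^ 2 := by
  have hs : 0 < s := h1.trans hω
  have key : s * ((s - ω) ^ 2 + (1 - ω / s) * (t ^ 2 - s ^ 2))
      = s * (s - ω) ^ 2 + (s - ω) * (t ^ 2 - s ^ 2) := by
    field_simp
  rcases le_or_gt ω t with h | h
  · rw [max_eq_left (by linarith), ← mul_le_mul_iff_right₀ hs, key]
    nlinarith [mul_nonneg h1.le (sq_nonneg (t - s))]
  · rw [max_eq_right (by linarith), ← mul_le_mul_iff_right₀ hs, key]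
    nlinarith [mul_nonneg (sub_pos.2 hω).le (show (0:ℝ) ≤ ω ^ 2 - t ^ 2 by nlinarith),
      mul_nonneg h1.le (sq_nonneg (s - ω))]

theorem stmt3 {n : ℕ} (ω : ℝ) (h1 : 0 < ω) (h2 : ω < 1 / Real.sqrt n)
    (x : Fin n → ℝ) (hx : n2 x = 1) :
    (n : ℝ) * (1 / Real.sqrt n - ω) ^ 2 ≤ ∑ i, max (|x i| - ω) 0 ^ 2 := by
  set s : ℝ := 1 / Real.sqrt n with hs_def
  have hn : 0 < (n : ℝ) := by
    by_contra h
    push_neg at h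
    have : (n : ℝ) = 0 := le_antisymm h (Nat.cast_nonneg n)
    rw [hs_def, this] at h2
    simp at h2
    linarith
  have hsq : Real.sqrt n > 0 := Real.sqrt_pos.2 hn
  have hs2 : s ^ 2 = 1 / n := by
    rw [hs_def, div_pow, one_pow, Real.sq_sqrt hn.le]
  have hsum : ∑ i, x i ^ 2 = 1 := by
    have := hx
    rw [n2] at this
    nlinarith [Real.sq_sqrt (Finset.sum_nonneg fun i _ => sq_nonneg (x i) :
      (0:ℝ) ≤ ∑ i, x i ^ 2), this]
  have key : ∀ i : Fin n, (s - ω) ^ 2 + (1 - ω / s) * ((x i) ^ 2 - s ^ 2)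
      ≤ max (|x i| - ω) 0 ^ 2 := fun i => by simpa [sq_abs] using aux3 s ω |x i| h1 h2 (abs_nonneg _)
  calc (n : ℝ) * (s - ω) ^ 2
      = ∑ i : Fin n, ((s - ω) ^ 2 + (1 - ω / s) * ((x i) ^ 2 - s ^ 2)) := by
        rw [Finset.sum_add_distrib, ← Finset.mul_sum, Finset.sum_sub_distrib, hsum,
          Finset.sum_const, Finset.card_univ, Fintype.card_fin, nsmul_eq_mul, hs2]
        field_simp
        simp [hn.ne']
    _ ≤ ∑ i, max (|x i| - ω) 0 ^ 2 := Finset.sum_le_sum fun i _ => key i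
end

section
/- If x is a KKT point of minimizing Σᵢ max(|x_i|−ω,0)² subject to ‖x‖₂ = 1 with multiplier λ, i.e., sgn(x_i)·max(|x_i|−ω,0) = λ·x_i for all i and ‖x‖₂ = 1, and there exists an index i with |x_i| > ω, then λ > 0 and every index i with |x_i| > ω satisfies |x_i| = ω/(1−λ), while every index with |x_i| ≤ ω satisfies x_i = 0. -/
theorem stmt5 {n : ℕ} (ω lam : ℝ) (hω : 0 < ω) (x : Fin n → ℝ)
    (hkkt : ∀ i, Real.sign (x i) * max (|x i| - ω) 0 = lam * x i)
    (hx : ∑ i, x i ^ 2 = 1) (hex : ∃ i, ω < |x i|) :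
    0 < lam ∧ (∀ i, ω < |x i| → |x i| = ω / (1 - lam)) ∧
    ∀ i, |x i| ≤ ω → x i = 0 := by
  have key : ∀ i, ω < |x i| → (1 - lam) * |x i| = ω := by
    intro i hi
    have h := hkkt i
    rcases lt_trichotomy (x i) 0 with h0 | h0 | h0
    · rw [Real.sign_of_neg h0, abs_of_neg h0] at *
      rw [max_eq_left (by linarith)] at h
      linear_combination -h
    · simp [h0, abs_of_nonneg] at hi; linarith
    · rw [Real.sign_of_pos h0, abs_of_pos h0] at *
      rw [max_eq_left (by linarith)] at h
      linear_combination h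
  obtain ⟨i0, hi0⟩ := hex
  have hk := key i0 hi0
  have hpos : 0 < |x i0| := lt_trans hω hi0
  have h1 : 0 < 1 - lam := by nlinarith
  have hlam : 0 < lam := by nlinarith
  refine ⟨hlam, fun i hi => ?_, fun i hi => ?_⟩
  · rw [eq_div_iff (ne_of_gt h1)]
    linear_combination key i hi
  · have h := hkkt i
    rw [max_eq_right (by linarith)] at h
    have : lam * x i = 0 := by linarith [h]
    rcases mul_eq_zero.mp this with h' | h'
    · exact absurd h' (ne_of_gt hlam)
    · exact h'
end

section
/- Let A ∈ ℝ^{n×m} be a nonzero matrix with largest singular value λ₁ and corresponding unit singular vector pair (x, y) (so A y = λ₁ x and Aᵀ x = λ₁ y). Let 0 ≤ ω < 1/√n and set x^ω = S(x,ω)/‖S(x,ω)‖₂ where S is entrywise soft-thresholding. Then ‖Aᵀ x^ω‖₂ ≥ (1 − ω√n + ω)·λ₁. -/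
lemma n2_nonneg {α : Type*} [Fintype α] (v : α → ℝ) : 0 ≤ n2 v := Real.sqrt_nonneg _

lemma n2_sq {α : Type*} [Fintype α] (v : α → ℝ) : n2 v ^ 2 = ∑ i, v i ^ 2 := by
  rw [n2, Real.sq_sqrt]
  exact Finset.sum_nonneg fun i _ => sq_nonneg _

lemma n2_cauchy {α : Type*} [Fintype α] (u v : α → ℝ) :
    ∑ i, u i * v i ≤ n2 u * n2 v := by
  have h := Finset.sum_mul_sq_le_sq_mul_sq Finset.univ u v
  calc ∑ i, u i * v i ≤ |∑ i, u i * v i| := le_abs_self _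
    _ = Real.sqrt ((∑ i, u i * v i) ^ 2) := by rw [Real.sqrt_sq_eq_abs]
    _ ≤ Real.sqrt ((∑ i, u i ^ 2) * ∑ i, v i ^ 2) := Real.sqrt_le_sqrt h
    _ = n2 u * n2 v := by
        rw [Real.sqrt_mul (Finset.sum_nonneg fun i _ => sq_nonneg _)]; rfl

lemma n2_triangle {α : Type*} [Fintype α] (u v : α → ℝ) :
    n2 (fun i => u i + v i) ≤ n2 u + n2 v := by
  have key : ∀ w : α → ℝ, n2 w = ‖(WithLp.equiv 2 (α → ℝ)).symm w‖ := by
    intro w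
    rw [EuclideanSpace.norm_eq, n2]
    congr 1; apply Finset.sum_congr rfl; intro i _
    rw [Real.norm_eq_abs, sq_abs]; rfl
  rw [key, key, key]
  exact norm_add_le _ _

theorem stmt7 {n m : ℕ} (A : Matrix (Fin n) (Fin m) ℝ) (lam : ℝ) (hlam : 0 < lam)
    (x : Fin n → ℝ) (y : Fin m → ℝ) (hx : n2 x = 1) (hy : n2 y = 1)
    (hAy : A.mulVec y = lam • x) (hAx : A.transpose.mulVec x = lam • y)
    (hmax : ∀ (u : Fin n → ℝ) (v : Fin m → ℝ), n2 u = 1 → n2 v = 1 →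
      ∑ i, ∑ j, u i * A i j * v j ≤ lam)
    (ω : ℝ) (hω0 : 0 ≤ ω) (hω : ω < 1 / Real.sqrt n) :
    (1 - ω * Real.sqrt n + ω) * lam
      ≤ n2 (A.transpose.mulVec (fun i => st x ω i / n2 (st x ω))) := by
  set s : Fin n → ℝ := st x ω with hs_def
  set t : Fin n → ℝ := fun i => max (|x i| - ω) 0 with ht_def
  have ht_nonneg : ∀ i, 0 ≤ t i := fun i => le_max_right _ _
  -- basic per-coordinate facts
  have hs_abs : ∀ i, |s i| = t i := by
    intro i
    rcases lt_trichotomy (x i) 0 with h | h | h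
    · simp [hs_def, st, Real.sign_of_neg h, abs_mul, abs_of_nonneg (ht_nonneg i), ht_def]
    · simp [hs_def, st, h, ht_def, Real.sign_zero, max_eq_right (by linarith : -ω ≤ (0:ℝ))]
    · simp [hs_def, st, Real.sign_of_pos h, abs_of_nonneg (ht_nonneg i), ht_def]
  have hs_sq : ∀ i, s i ^ 2 = t i ^ 2 := by
    intro i; rw [← sq_abs, hs_abs]
  have hsx : ∀ i, s i * x i = t i ^ 2 + ω * t i := by
    intro i
    rcases le_or_gt (|x i|) ω with h | h
    · have ht0 : t i = 0 := max_eq_right (by linarith)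
      have hs0 : s i = 0 := by
        have := hs_abs i; rw [ht0] at this; exact abs_eq_zero.mp this
      simp [hs0, ht0]
    · have hxne : x i ≠ 0 := by
        intro h0; rw [h0, abs_zero] at h; linarith
      have ht : t i = |x i| - ω := max_eq_left (by linarith)
      have hsi : s i = Real.sign (x i) * (|x i| - ω) := by
        simp only [hs_def, st]
        rw [max_eq_left (by linarith : (0:ℝ) ≤ |x i| - ω)]
      rw [hsi, ht]
      rcases lt_trichotomy (x i) 0 with hc | hc | hc
      · rw [Real.sign_of_neg hc, abs_of_neg hc]; ring
      · exact absurd hc hxne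
      · rw [Real.sign_of_pos hc, abs_of_pos hc]; ring
  have hdiff : ∀ i, (x i - s i) ^ 2 ≤ ω ^ 2 := by
    intro i
    rcases le_or_gt (|x i|) ω with h | h
    · have ht0 : t i = 0 := max_eq_right (by linarith)
      have hs0 : s i = 0 := by
        have := hs_abs i; rw [ht0] at this; exact abs_eq_zero.mp this
      rw [hs0, sub_zero, ← sq_abs]
      exact pow_le_pow_left₀ (abs_nonneg _) h 2
    · have hxne : x i ≠ 0 := by
        intro h0; rw [h0, abs_zero] at h; linarith
      have ht : t i = |x i| - ω := max_eq_left (by linarith)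
      have hsi : s i = Real.sign (x i) * (|x i| - ω) := by
        simp only [hs_def, st]
        rw [max_eq_left (by linarith : (0:ℝ) ≤ |x i| - ω)]
      rw [hsi]
      rcases lt_trichotomy (x i) 0 with hc | hc | hc
      · rw [Real.sign_of_neg hc, abs_of_neg hc]; nlinarith [sq_nonneg ω]
      · exact absurd hc hxne
      · rw [Real.sign_of_pos hc, abs_of_pos hc]; nlinarith [sq_nonneg ω]
  -- n > 0
  have hn0 : 0 < n := by
    by_contra h
    have : n = 0 := by omega
    rw [this] at hω
    simp at hω
    linarith
  have hsqn_pos : 0 < Real.sqrt n := Real.sqrt_pos.mpr (by positivity)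
  have hωn : ω * Real.sqrt n < 1 := by
    rw [lt_div_iff₀ hsqn_pos] at hω; linarith [hω]
  -- sum of squares of x is 1
  have hx2 : ∑ i, x i ^ 2 = 1 := by
    have := n2_sq x; rw [hx] at this; linarith
  -- some coordinate exceeds ω
  have hNs_pos : 0 < n2 s := by
    have hex : ∃ i, ω < |x i| := by
      by_contra h
      push_neg at h
      have hb : ∑ i, x i ^ 2 ≤ ∑ _i : Fin n, ω ^ 2 := by
        apply Finset.sum_le_sum
        intro i _
        rw [← sq_abs]
        exact pow_le_pow_left₀ (abs_nonneg _) (h i) 2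
      rw [Finset.sum_const, Finset.card_univ, Fintype.card_fin, hx2] at hb
      have hωsq : ω ^ 2 < (1 / Real.sqrt n) ^ 2 := by
        exact pow_lt_pow_left₀ hω hω0 (by norm_num)
      have h1 : (1 / Real.sqrt n) ^ 2 = 1 / n := by
        rw [div_pow, one_pow, Real.sq_sqrt (by positivity : (0:ℝ) ≤ (n:ℝ))]
      rw [h1] at hωsq
      have : (n : ℝ) * ω ^ 2 < (n : ℝ) * (1 / n) := by
        apply mul_lt_mul_of_pos_left hωsq (by positivity)
      rw [mul_one_div, div_self (by positivity : (n:ℝ) ≠ 0)] at this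
      rw [nsmul_eq_mul] at hb
      linarith
    obtain ⟨i, hi⟩ := hex
    have hti : 0 < t i := lt_max_of_lt_left (by linarith)
    rw [n2, Real.sqrt_pos]
    have : t i ^ 2 ≤ ∑ j, s j ^ 2 := by
      rw [← hs_sq i]
      exact Finset.single_le_sum (f := fun j => s j ^ 2) (fun j _ => sq_nonneg (s j))
        (Finset.mem_univ i)
    nlinarith
  set Ns := n2 s with hNs_def
  -- inner product ⟨s, x⟩
  have hsx_sum : ∑ i, s i * x i = Ns ^ 2 + ω * ∑ i, t i := by
    rw [hNs_def, n2_sq]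
    rw [Finset.sum_congr rfl (fun i _ => hsx i), Finset.sum_add_distrib,
      Finset.mul_sum]
    congr 1
    exact Finset.sum_congr rfl (fun i _ => (hs_sq i).symm)
  -- n1 ≥ n2
  have hN1 : Ns ≤ ∑ i, t i := by
    have h1 : ∑ i, s i ^ 2 ≤ (∑ i, t i) * (∑ i, t i) := by
      calc ∑ i, s i ^ 2 = ∑ i, t i * t i := by
            refine Finset.sum_congr rfl fun i _ => ?_
            rw [hs_sq i]; ring
        _ ≤ ∑ i, t i * (∑ j, t j) := by
            apply Finset.sum_le_sum
            intro i _
            exact mul_le_mul_of_nonneg_left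
              (Finset.single_le_sum (fun j _ => ht_nonneg j) (Finset.mem_univ i)) (ht_nonneg i)
        _ = (∑ i, t i) * (∑ i, t i) := by rw [← Finset.sum_mul]
    have := Real.sqrt_le_sqrt h1
    rw [hNs_def, n2]
    calc Real.sqrt (∑ i, s i ^ 2) ≤ Real.sqrt ((∑ i, t i) * (∑ i, t i)) := this
      _ = ∑ i, t i := Real.sqrt_mul_self (Finset.sum_nonneg fun i _ => ht_nonneg i)
  -- Ns ≥ 1 - ω√n
  have hNs_lb : 1 - ω * Real.sqrt n ≤ Ns := by
    have htri : n2 x ≤ n2 (fun i => (x i - s i)) + n2 s := by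
      have := n2_triangle (fun i => x i - s i) s
      simpa using this
    have hd : n2 (fun i => x i - s i) ≤ ω * Real.sqrt n := by
      rw [n2]
      calc Real.sqrt (∑ i, (x i - s i) ^ 2)
          ≤ Real.sqrt (∑ _i : Fin n, ω ^ 2) :=
            Real.sqrt_le_sqrt (Finset.sum_le_sum fun i _ => hdiff i)
        _ = Real.sqrt ((n : ℝ) * ω ^ 2) := by
            rw [Finset.sum_const, Finset.card_univ, Fintype.card_fin, nsmul_eq_mul]
        _ = ω * Real.sqrt n := by
            rw [Real.sqrt_mul (by positivity), Real.sqrt_sq hω0]; ring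
    rw [hx] at htri
    linarith
  -- the unit vector u
  set u : Fin n → ℝ := fun i => s i / Ns with hu_def
  set w : Fin m → ℝ := A.transpose.mulVec u with hw_def
  -- ⟨w, y⟩ = lam * ⟨u, x⟩
  have hkey : ∑ j, w j * y j = lam * ∑ i, u i * x i := by
    have h1 : ∑ j, w j * y j = ∑ i, u i * (A.mulVec y) i := by
      rw [hw_def]
      simp only [Matrix.mulVec, dotProduct, Matrix.transpose_apply]
      calc ∑ j, (∑ i, A i j * u i) * y j
          = ∑ j, ∑ i, A i j * u i * y j := by
            apply Finset.sum_congr rfl; intro j _; rw [Finset.sum_mul]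
        _ = ∑ i, ∑ j, A i j * u i * y j := Finset.sum_comm
        _ = ∑ i, u i * ∑ j, A i j * y j := by
            apply Finset.sum_congr rfl; intro i _
            rw [Finset.mul_sum]
            apply Finset.sum_congr rfl; intro j _; ring
    rw [h1, hAy]
    simp only [Pi.smul_apply, smul_eq_mul]
    rw [Finset.mul_sum]
    apply Finset.sum_congr rfl; intro i _
    ring
  -- ⟨u, x⟩ ≥ 1 - ω√n + ω
  have hux : 1 - ω * Real.sqrt n + ω ≤ ∑ i, u i * x i := by
    have h1 : ∑ i, u i * x i = (∑ i, s i * x i) / Ns := by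
      rw [Finset.sum_div]
      apply Finset.sum_congr rfl; intro i _
      rw [hu_def]; ring
    rw [h1, hsx_sum]
    rw [add_div]
    have h2 : Ns ^ 2 / Ns = Ns := by
      field_simp
    rw [h2]
    have h3 : ω ≤ ω * (∑ i, t i) / Ns := by
      rw [mul_div_assoc]
      have : 1 ≤ (∑ i, t i) / Ns := (one_le_div hNs_pos).mpr hN1
      nlinarith
    linarith
  -- Cauchy–Schwarz finish
  have hcs : ∑ j, w j * y j ≤ n2 w := by
    calc ∑ j, w j * y j ≤ n2 w * n2 y := n2_cauchy w y
      _ = n2 w := by rw [hy, mul_one]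
  calc (1 - ω * Real.sqrt n + ω) * lam ≤ lam * ∑ i, u i * x i := by
        rw [mul_comm]
        exact mul_le_mul_of_nonneg_left hux hlam.le
    _ = ∑ j, w j * y j := hkey.symm
    _ ≤ n2 w := hcs
end

section
/- Let A ∈ ℝ^{n×m} be nonzero with largest singular value λ₁ and unit singular pair (x,y), let 0 ≤ ω < 1/√n, and let x^ω = S(x,ω)/‖S(x,ω)‖₂. Then ⟨x^ω, x⟩ − ω‖x^ω‖₁ = sqrt(Σᵢ max(|x_i|−ω,0)²) ≥ 1 − ω√n. -/
theorem stmt8 {n m : ℕ} (A : Matrix (Fin n) (Fin m) ℝ) (lam : ℝ) (hlam : 0 < lam)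
    (x : Fin n → ℝ) (y : Fin m → ℝ) (hx : n2 x = 1) (hy : n2 y = 1)
    (hAy : A.mulVec y = lam • x) (hAx : A.transpose.mulVec x = lam • y)
    (hmax : ∀ (u : Fin n → ℝ) (v : Fin m → ℝ), n2 u = 1 → n2 v = 1 →
      ∑ i, ∑ j, u i * A i j * v j ≤ lam)
    (ω : ℝ) (hω0 : 0 ≤ ω) (hω : ω < 1 / Real.sqrt n) :
    (∑ i, (st x ω i / n2 (st x ω)) * x i) - ω * n1 (fun i => st x ω i / n2 (st x ω))
        = Real.sqrt (∑ i, max (|x i| - ω) 0 ^ 2) ∧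
    1 - ω * Real.sqrt n ≤ Real.sqrt (∑ i, max (|x i| - ω) 0 ^ 2) := by
  classical
  set M : Fin n → ℝ := fun i => max (|x i| - ω) 0 with hM
  have hM0 : ∀ i, 0 ≤ M i := fun i => le_max_right _ _
  have hsum2 : ∑ i, x i ^ 2 = 1 := by
    have h2 : Real.sqrt (∑ i, x i ^ 2) = 1 := hx
    have hnn : 0 ≤ ∑ i, x i ^ 2 := Finset.sum_nonneg fun i _ => sq_nonneg _
    nlinarith [Real.sq_sqrt hnn]
  -- n > 0
  have hn : 0 < n := by
    by_contra h
    push_neg at h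
    interval_cases n
    simp [n2] at hx
  -- key pointwise facts about st
  have hst_abs : ∀ i, |st x ω i| = M i := by
    intro i
    simp only [st, abs_mul]
    rcases eq_or_ne (x i) 0 with h | h
    · simp [h, hM, max_eq_right, hω0]
    · rcases h.lt_or_gt with hl | hl
      · rw [Real.sign_of_neg hl]; simp [abs_of_nonneg (hM0 i)]; exact abs_of_nonneg (hM0 i)
      · rw [Real.sign_of_pos hl]; simp [abs_of_nonneg (hM0 i)]; exact abs_of_nonneg (hM0 i)
  have hst_sq : ∀ i, st x ω i ^ 2 = M i ^ 2 := by
    intro i; rw [← sq_abs, hst_abs]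
  have hst_mul : ∀ i, st x ω i * x i = M i * |x i| := by
    intro i
    simp only [st]
    rcases eq_or_ne (x i) 0 with h | h
    · simp [h]
    · rcases h.lt_or_gt with hl | hl
      · simp only [hM]; rw [Real.sign_of_neg hl, abs_of_neg hl]; ring
      · simp only [hM]; rw [Real.sign_of_pos hl, abs_of_pos hl]; ring
  -- N = n2 (st x ω)
  have hN : n2 (st x ω) = Real.sqrt (∑ i, M i ^ 2) := by
    simp only [n2]
    congr 1
    exact Finset.sum_congr rfl fun i _ => hst_sq i
  set N : ℝ := Real.sqrt (∑ i, M i ^ 2) with hNdef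
  have hSnn : 0 ≤ ∑ i, M i ^ 2 := Finset.sum_nonneg fun i _ => sq_nonneg _
  -- N > 0 : some coordinate exceeds ω
  have hsqrtn : (0:ℝ) < Real.sqrt n := Real.sqrt_pos.mpr (by positivity)
  have hexists : ∃ i, 1 / (n:ℝ) ≤ x i ^ 2 := by
    by_contra h
    push_neg at h
    have : ∑ i, x i ^ 2 < ∑ _i : Fin n, 1 / (n:ℝ) :=
      Finset.sum_lt_sum_of_nonempty (Finset.univ_nonempty_iff.mpr ⟨⟨0, hn⟩⟩)
        (fun i _ => h i)
    rw [hsum2] at this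
    simp at this
    have hne : (n:ℝ) * (n:ℝ)⁻¹ = 1 := mul_inv_cancel₀ (by positivity)
    linarith
  obtain ⟨i0, hi0⟩ := hexists
  have hxi0 : ω < |x i0| := by
    have h1 : Real.sqrt ((n:ℝ)⁻¹) ≤ Real.sqrt (x i0 ^ 2) := by
      apply Real.sqrt_le_sqrt
      rwa [one_div] at hi0
    rw [Real.sqrt_inv, Real.sqrt_sq_eq_abs] at h1
    calc ω < 1 / Real.sqrt n := hω
      _ = (Real.sqrt n)⁻¹ := one_div _
      _ ≤ |x i0| := h1
  have hMi0 : 0 < M i0 := lt_max_iff.mpr (Or.inl (by linarith))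
  have hSpos : 0 < ∑ i, M i ^ 2 :=
    Finset.sum_pos' (fun i _ => sq_nonneg _) ⟨i0, Finset.mem_univ i0, by positivity⟩
  have hNpos : 0 < N := Real.sqrt_pos.mpr hSpos
  have hNsq : N ^ 2 = ∑ i, M i ^ 2 := Real.sq_sqrt hSnn
  constructor
  · -- equality part
    rw [hN]
    have hl1 : n1 (fun i => st x ω i / N) = (∑ i, M i) / N := by
      simp only [n1, abs_div, abs_of_pos hNpos, ← Finset.sum_div]
      congr 1
      refine Finset.sum_congr rfl fun i _ => ?_
      rw [hst_abs]
    have hdot : (∑ i, (st x ω i / N) * x i) = (∑ i, M i * |x i|) / N := by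
      rw [Finset.sum_div]
      refine Finset.sum_congr rfl fun i _ => ?_
      rw [div_mul_eq_mul_div, hst_mul]
    rw [hdot, hl1]
    rw [← mul_div_assoc, div_sub_div_same]
    have hnum : (∑ i, M i * |x i|) - ω * ∑ i, M i = ∑ i, M i ^ 2 := by
      rw [Finset.mul_sum, ← Finset.sum_sub_distrib]
      refine Finset.sum_congr rfl fun i _ => ?_
      rcases le_or_gt (|x i| - ω) 0 with h | h
      · have : M i = 0 := max_eq_right h
        simp [this]
      · have hMi : M i = |x i| - ω := max_eq_left h.le
        rw [hMi]; ring
    rw [hnum, ← hNsq, sq, mul_div_assoc, div_self hNpos.ne', mul_one]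
  · -- inequality part
    have hCS1 : ∑ i, M i * |x i| ≤ N := by
      have h := Real.sum_mul_le_sqrt_mul_sqrt Finset.univ M (fun i => |x i|)
      simp only [sq_abs, hsum2, Real.sqrt_one, mul_one] at h
      exact h
    have hl1x : ∑ i, |x i| ≤ Real.sqrt n := by
      have h := Real.sum_mul_le_sqrt_mul_sqrt Finset.univ (fun i => |x i|) (fun _ => (1:ℝ))
      simp only [mul_one, one_pow, sq_abs, hsum2, Real.sqrt_one, one_mul,
        Finset.sum_const, Finset.card_univ, Fintype.card_fin, nsmul_eq_mul] at h
      exact h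
    have hlow : 1 - ω * ∑ i, |x i| ≤ ∑ i, M i * |x i| := by
      have : ∑ i, (|x i| - ω) * |x i| ≤ ∑ i, M i * |x i| :=
        Finset.sum_le_sum fun i _ => by
          exact mul_le_mul_of_nonneg_right (le_max_left _ _) (abs_nonneg _)
      calc 1 - ω * ∑ i, |x i| = ∑ i, (|x i| - ω) * |x i| := by
            simp_rw [sub_mul, abs_mul_abs_self, ← pow_two, Finset.sum_sub_distrib,
              hsum2, ← Finset.mul_sum]
        _ ≤ _ := this
    have : 1 - ω * Real.sqrt n ≤ 1 - ω * ∑ i, |x i| := by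
      have := mul_le_mul_of_nonneg_left hl1x hω0
      linarith
    linarith
end

section
/- Let A ∈ ℝ^{n×m} be nonzero, let A^k̄ be a row of A of largest Euclidean norm, set y = (A^k̄)ᵀ ∈ ℝ^m, x = Ay/‖Ay‖₂, and for 0 ≤ ω < 1/√n set x^ω = S(x,ω)/‖S(x,ω)‖₂. Then ‖Aᵀ x^ω‖₂ ≥ ((1 − ω√n + ω)/√n)·‖A‖_F. -/
lemma n2_eq_zero {α : Type*} [Fintype α] {v : α → ℝ} (h : n2 v = 0) : v = 0 := by
  have hs : ∑ i, v i ^ 2 = 0 :=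
    le_antisymm (Real.sqrt_eq_zero'.mp h) (Finset.sum_nonneg fun i _ => sq_nonneg _)
  funext i
  have hv := (Finset.sum_eq_zero_iff_of_nonneg (fun i _ => sq_nonneg (v i))).mp hs i
    (Finset.mem_univ i)
  exact pow_eq_zero_iff two_ne_zero |>.mp hv

lemma n2_le_n1 {α : Type*} [Fintype α] (v : α → ℝ) : n2 v ≤ n1 v := by
  rw [n2, n1]
  have h : ∑ i, v i ^ 2 ≤ (∑ i, |v i|) ^ 2 := by
    calc ∑ i, v i ^ 2 = ∑ i, |v i| * |v i| := by
          simp [sq_abs, sq]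
      _ ≤ ∑ i, (∑ j, |v j|) * |v i| := by
          apply Finset.sum_le_sum
          intro i _
          exact mul_le_mul_of_nonneg_right
            (Finset.single_le_sum (fun j _ => abs_nonneg (v j)) (Finset.mem_univ i))
            (abs_nonneg _)
      _ = (∑ i, |v i|) ^ 2 := by rw [← Finset.mul_sum]; ring
  calc Real.sqrt (∑ i, v i ^ 2) ≤ Real.sqrt ((∑ i, |v i|) ^ 2) := Real.sqrt_le_sqrt h
    _ = ∑ i, |v i| := Real.sqrt_sq (Finset.sum_nonneg fun j _ => abs_nonneg (v j))

lemma real_sign_mul_self (t : ℝ) : Real.sign t * t = |t| := by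
  rcases lt_trichotomy t 0 with h | h | h
  · rw [Real.sign_of_neg h, abs_of_neg h]; ring
  · simp [h]
  · rw [Real.sign_of_pos h, abs_of_pos h]; ring

set_option maxHeartbeats 1000000

theorem stmt10 {n m : ℕ} (A : Matrix (Fin n) (Fin m) ℝ) (hA : A ≠ 0)
    (kbar : Fin n) (hk : ∀ k, n2 (A k) ≤ n2 (A kbar))
    (ω : ℝ) (hω0 : 0 ≤ ω) (hω : ω < 1 / Real.sqrt n)
    (y : Fin m → ℝ) (hy : y = A kbar)
    (x : Fin n → ℝ) (hx : x = fun i => A.mulVec y i / n2 (A.mulVec y))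
    (xω : Fin n → ℝ) (hxω : xω = fun i => st x ω i / n2 (st x ω)) :
    ((1 - ω * Real.sqrt n + ω) / Real.sqrt n) * Real.sqrt (∑ i, ∑ j, A i j ^ 2)
      ≤ n2 (A.transpose.mulVec xω) := by
  have hsqn : 0 < Real.sqrt n := one_div_pos.mp (lt_of_le_of_lt hω0 hω)
  have hωn : ω * Real.sqrt n < 1 := by
    have := (lt_div_iff₀ hsqn).mp hω; linarith
  -- y is nonzero
  have hny : 0 < n2 y := by
    rcases (lt_or_eq_of_le (n2_nonneg y)) with h | h
    · exact h
    · exfalso; apply hA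
      funext i j
      have h1 : n2 (A i) = 0 := le_antisymm
        (calc n2 (A i) ≤ n2 (A kbar) := hk i
          _ = n2 y := by rw [hy]
          _ = 0 := h.symm) (n2_nonneg _)
      have h2 := congrFun (n2_eq_zero h1) j
      simpa using h2
  set a : Fin n → ℝ := A.mulVec y with ha
  have hak : a kbar = n2 y ^ 2 := by
    rw [n2_sq, ha, hy]
    simp [Matrix.mulVec, dotProduct, sq]
  have hna2 : n2 a ^ 2 = ∑ i, a i ^ 2 := n2_sq _
  have hna_ge : n2 y ^ 2 ≤ n2 a := by
    have hsq : (n2 y ^ 2) ^ 2 ≤ n2 a ^ 2 := by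
      rw [hna2, ← hak]
      exact Finset.single_le_sum (fun i _ => sq_nonneg (a i)) (Finset.mem_univ kbar)
    calc n2 y ^ 2 = Real.sqrt ((n2 y ^ 2) ^ 2) := (Real.sqrt_sq (by positivity)).symm
      _ ≤ Real.sqrt (n2 a ^ 2) := Real.sqrt_le_sqrt hsq
      _ = n2 a := Real.sqrt_sq (n2_nonneg a)
  have hna : 0 < n2 a := lt_of_lt_of_le (by positivity) hna_ge
  have hai : ∀ i, a i = x i * n2 a := by
    intro i; rw [hx]; field_simp
  have hxnorm : ∑ i, x i ^ 2 = 1 := by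
    rw [hx]
    simp only [div_pow]
    rw [← Finset.sum_div, ← hna2]
    field_simp
  set s : Fin n → ℝ := st x ω with hs
  have habs : ∀ i, |s i| = max (|x i| - ω) 0 := by
    intro i
    rw [hs, st, abs_mul, abs_of_nonneg (le_max_right (|x i| - ω) 0)]
    rcases eq_or_ne (x i) 0 with h | h
    · have : |x i| - ω ≤ 0 := by rw [h]; simpa using hω0
      simp [h, max_eq_right this, hω0]
    · rcases lt_or_gt_of_ne h with h' | h'
      · rw [Real.sign_of_neg h']; simp
      · rw [Real.sign_of_pos h']; simp
  have hsx : ∀ i, s i * x i = max (|x i| - ω) 0 * |x i| := by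
    intro i
    rw [hs, st, mul_right_comm, real_sign_mul_self, mul_comm]
  set ns : ℝ := n2 s with hns
  have hns2 : ns ^ 2 = ∑ i, s i ^ 2 := n2_sq _
  have hn1s : ns ≤ n1 s := n2_le_n1 s
  have hn1nonneg : 0 ≤ n1 s := Finset.sum_nonneg fun i _ => abs_nonneg _
  have hsum_sx : (∑ i, s i ^ 2) + ω * n1 s ≤ ∑ i, s i * x i := by
    rw [n1, Finset.mul_sum, ← Finset.sum_add_distrib]
    apply Finset.sum_le_sum
    intro i _
    rw [hsx i, ← sq_abs (s i), habs i]
    rcases max_cases (|x i| - ω) 0 with ⟨h1, h2⟩ | ⟨h1, h2⟩ <;> rw [h1] <;> nlinarith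
  -- lower bound on ns
  have hCSones : n1 s ≤ ns * Real.sqrt n := by
    have h := Real.sum_mul_le_sqrt_mul_sqrt Finset.univ (fun i => |s i|) (fun _ => 1)
    simp only [mul_one, one_pow, Finset.sum_const, Finset.card_univ, Fintype.card_fin,
      nsmul_eq_mul, sq_abs] at h
    rw [n1]
    exact h
  have hnn : (Real.sqrt n) ^ 2 = (n : ℝ) := Real.sq_sqrt (Nat.cast_nonneg n)
  have hnslb : 1 - ω * Real.sqrt n ≤ ns := by
    have hexp : ∑ i, (|s i| + ω) ^ 2
        = (∑ i, s i ^ 2) + (2 * ω * n1 s + (n : ℝ) * ω ^ 2) := by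
      have : ∑ i, (|s i| + ω) ^ 2 = ∑ i, (s i ^ 2 + (2 * ω * |s i| + ω ^ 2)) := by
        apply Finset.sum_congr rfl
        intro i _
        rw [← sq_abs (s i)]; ring
      rw [this, Finset.sum_add_distrib, Finset.sum_add_distrib, Finset.sum_const,
        Finset.card_univ, Fintype.card_fin, n1, Finset.mul_sum, nsmul_eq_mul]
    have hpt : ∑ i, x i ^ 2 ≤ ∑ i, (|s i| + ω) ^ 2 := by
      apply Finset.sum_le_sum
      intro i _
      have h2 : |x i| ≤ |s i| + ω := by
        rw [habs i]
        have := le_max_left (|x i| - ω) 0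
        linarith
      calc x i ^ 2 = |x i| ^ 2 := (sq_abs _).symm
        _ ≤ (|s i| + ω) ^ 2 := by nlinarith [abs_nonneg (x i)]
    have h1 : (1 : ℝ) ≤ (ns + ω * Real.sqrt n) ^ 2 := by
      have hb : 2 * ω * n1 s ≤ 2 * ω * (ns * Real.sqrt n) := by
        apply mul_le_mul_of_nonneg_left hCSones (by linarith)
      nlinarith [hxnorm, hpt, hexp, hns2]
    have hnsnn : 0 ≤ ns := n2_nonneg _
    have ht0 : 0 ≤ ns + ω * Real.sqrt n := add_nonneg hnsnn (mul_nonneg hω0 hsqn.le)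
    nlinarith [h1, ht0]
  have hnspos : 0 < ns := by linarith
  -- main chain
  set T : Fin m → ℝ := A.transpose.mulVec xω with hT
  have heq : ∑ j, T j * y j = ∑ i, xω i * a i := by
    simp only [hT, ha, Matrix.mulVec, dotProduct, Matrix.transpose_apply,
      Finset.sum_mul, Finset.mul_sum]
    rw [Finset.sum_comm]
    exact Finset.sum_congr rfl fun i _ => Finset.sum_congr rfl fun j _ => by ring
  have hTsum : ∑ i, xω i * a i ≤ n2 T * n2 y := by
    have hcs := Real.sum_mul_le_sqrt_mul_sqrt Finset.univ T y
    rw [heq] at hcs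
    exact hcs
  have e1 : ∑ i, xω i * a i = (n2 a / ns) * ∑ i, s i * x i := by
    rw [hxω, Finset.mul_sum]
    apply Finset.sum_congr rfl
    intro i _
    rw [hai i]
    ring
  have e3 : ns ^ 2 + ω * ns ≤ ∑ i, s i * x i := by
    have : ns ^ 2 + ω * ns ≤ (∑ i, s i ^ 2) + ω * n1 s := by
      rw [hns2]
      have := mul_le_mul_of_nonneg_left hn1s hω0
      linarith
    linarith
  have e4 : (n2 a / ns) * (ns ^ 2 + ω * ns) = n2 a * (ns + ω) := by
    field_simp
  have hmain : n2 y ^ 2 * (1 - ω * Real.sqrt n + ω) ≤ ∑ i, xω i * a i := by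
    rw [e1]
    calc n2 y ^ 2 * (1 - ω * Real.sqrt n + ω)
        ≤ n2 a * (ns + ω) := by
          apply mul_le_mul hna_ge (by linarith) (by linarith) (n2_nonneg a)
      _ = (n2 a / ns) * (ns ^ 2 + ω * ns) := e4.symm
      _ ≤ (n2 a / ns) * ∑ i, s i * x i := by
          apply mul_le_mul_of_nonneg_left e3 (by positivity)
  have hTlb : n2 y * (1 - ω * Real.sqrt n + ω) ≤ n2 T := by
    have h1 : n2 y ^ 2 * (1 - ω * Real.sqrt n + ω) ≤ n2 T * n2 y := le_trans hmain hTsum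
    have h2 : (n2 y * (1 - ω * Real.sqrt n + ω)) * n2 y ≤ n2 T * n2 y := by
      calc (n2 y * (1 - ω * Real.sqrt n + ω)) * n2 y
          = n2 y ^ 2 * (1 - ω * Real.sqrt n + ω) := by ring
        _ ≤ n2 T * n2 y := h1
    exact le_of_mul_le_mul_right h2 hny
  have hF : Real.sqrt (∑ i, ∑ j, A i j ^ 2) ≤ Real.sqrt n * n2 y := by
    have h1 : ∑ i, ∑ j, A i j ^ 2 ≤ (n : ℝ) * n2 y ^ 2 := by
      calc ∑ i, ∑ j, A i j ^ 2 = ∑ i, n2 (A i) ^ 2 := by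
            exact Finset.sum_congr rfl fun i _ => (n2_sq (A i)).symm
        _ ≤ ∑ _i : Fin n, n2 y ^ 2 := by
            apply Finset.sum_le_sum
            intro i _
            have hki : n2 (A i) ≤ n2 y := by rw [hy]; exact hk i
            exact pow_le_pow_left₀ (n2_nonneg _) hki 2
        _ = (n : ℝ) * n2 y ^ 2 := by
            rw [Finset.sum_const, Finset.card_univ, Fintype.card_fin, nsmul_eq_mul]
    calc Real.sqrt (∑ i, ∑ j, A i j ^ 2) ≤ Real.sqrt ((n : ℝ) * n2 y ^ 2) :=
          Real.sqrt_le_sqrt h1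
      _ = Real.sqrt n * n2 y := by
          rw [Real.sqrt_mul (Nat.cast_nonneg n), Real.sqrt_sq hny.le]
  calc ((1 - ω * Real.sqrt n + ω) / Real.sqrt n) * Real.sqrt (∑ i, ∑ j, A i j ^ 2)
      ≤ ((1 - ω * Real.sqrt n + ω) / Real.sqrt n) * (Real.sqrt n * n2 y) := by
        apply mul_le_mul_of_nonneg_left hF
        apply div_nonneg (by linarith) hsqn.le
    _ = n2 y * (1 - ω * Real.sqrt n + ω) := by
        field_simp
    _ ≤ n2 T := hTlb
end

section
/- Let d ≥ 3, 𝒜 ∈ ℝ^{n₁×⋯×n_d}, and 0 ≤ ω_j < 1/√n_j for each j. If (x₁^{ω₁},…,x_d^{ω_d}) is the output of the SVD-based multilinear relaxation and soft-thresholding algorithm (Algorithm V1), then ⟨𝒜, x₁^{ω₁}∘⋯∘x_d^{ω_d}⟩ ≥ (∏_{j=1}^d (1 − ω_j√n_j + ω_j) / sqrt(∏_{j=2}^{d−1} n_j)) · λ_max(A₁) ≥ (∏_{j=1}^d (1 − ω_j√n_j + ω_j) / sqrt(∏_{j=2}^{d−1} n_j)) · ⟨𝒜, x̃₁∘⋯∘x̃_d⟩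 for any unit vectors x̃_j. -/
/-- Multi-indices of the modes strictly before mode `j`. -/
abbrev Lt {d : ℕ} (n : Fin d → ℕ) (j : Fin d) :=
  (k : {k : Fin d // k.val < j.val}) → Fin (n k)

/-- Multi-indices of the modes strictly after mode `j`. -/
abbrev Gt {d : ℕ} (n : Fin d → ℕ) (j : Fin d) :=
  (k : {k : Fin d // j.val < k.val}) → Fin (n k)

/-- Assemble a full multi-index from a prefix `I`, a mode-`j` index `i` and a suffix `J`. -/
def glue {d : ℕ} {n : Fin d → ℕ} (j : Fin d) (I : Lt n j) (i : Fin (n j)) (J : Gt n j) :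
    (k : Fin d) → Fin (n k) := fun k =>
  if h : k.val < j.val then I ⟨k, h⟩
  else if h' : j.val < k.val then J ⟨k, h'⟩
  else
    cast (congrArg (fun t => Fin (n t))
      (Fin.ext (le_antisymm (not_lt.mp h) (not_lt.mp h')) : j = k)) i

/-- The `j`-th matrix `A_j` of the multilinear-relaxation algorithms: the mode-`j`
unfolding of the tensor `𝒜` contracted with the vectors `x k` for all modes `k < j`. -/
noncomputable def Mj {d : ℕ} {n : Fin d → ℕ} (A : ((k : Fin d) → Fin (n k)) → ℝ)
    (x : (k : Fin d) → Fin (n k) → ℝ) (j : Fin d) :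
    Matrix (Fin (n j)) (Gt n j) ℝ :=
  Matrix.of fun i J =>
    ∑ I : Lt n j, A (glue j I i J) * ∏ k : {k : Fin d // k.val < j.val}, x k (I k)

/-! ### Auxiliary lemmas -/

section Basics
variable {α : Type*} [Fintype α]
lemma n2_nonneg_s18 (x : α → ℝ) : 0 ≤ n2 x := Real.sqrt_nonneg _

lemma sq_n2 (x : α → ℝ) : n2 x ^ 2 = ∑ i, x i ^ 2 :=
  Real.sq_sqrt (Finset.sum_nonneg fun i _ => sq_nonneg _)

lemma n2_eq_one_of (x : α → ℝ) (h : ∑ i, x i ^ 2 = 1) : n2 x = 1 := by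
  rw [n2, h, Real.sqrt_one]

lemma inner_le_n2 (x y : α → ℝ) : ∑ i, x i * y i ≤ n2 x * n2 y := by
  have h := Finset.sum_mul_sq_le_sq_mul_sq Finset.univ x y
  calc ∑ i, x i * y i ≤ |∑ i, x i * y i| := le_abs_self _
    _ = Real.sqrt ((∑ i, x i * y i) ^ 2) := (Real.sqrt_sq_eq_abs _).symm
    _ ≤ Real.sqrt ((∑ i, x i ^ 2) * ∑ i, y i ^ 2) := Real.sqrt_le_sqrt h
    _ = n2 x * n2 y :=
      Real.sqrt_mul (Finset.sum_nonneg fun i _ => sq_nonneg _) _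

lemma n2_smul (c : ℝ) (x : α → ℝ) : n2 (fun i => c * x i) = |c| * n2 x := by
  simp only [n2, mul_pow, ← Finset.mul_sum]
  rw [Real.sqrt_mul (sq_nonneg c), Real.sqrt_sq_eq_abs]

lemma n2_eq_zero_iff (x : α → ℝ) : n2 x = 0 ↔ x = 0 := by
  rw [n2, Real.sqrt_eq_zero (Finset.sum_nonneg fun i _ => sq_nonneg _)]
  constructor
  · intro h
    funext i
    have := (Finset.sum_eq_zero_iff_of_nonneg (fun i _ => sq_nonneg (x i))).mp h i
      (Finset.mem_univ i)
    simpa [pow_eq_zero_iff] using this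
  · intro h; rw [h]; simp

lemma nonempty_of_n2_eq_one (x : α → ℝ) (h : n2 x = 1) : Nonempty α := by
  by_contra hne
  haveI : IsEmpty α := not_nonempty_iff.mp hne
  rw [n2] at h
  simp at h

lemma n2_one_div (v : α → ℝ) (hv : v ≠ 0) : n2 (fun i => v i / n2 v) = 1 := by
  have h0 : 0 < n2 v := by
    rcases lt_or_eq_of_le (n2_nonneg_s18 v) with h | h
    · exact h
    · exact absurd ((n2_eq_zero_iff v).mp h.symm) hv
  have : (fun i => v i / n2 v) = fun i => (n2 v)⁻¹ * v i := by
    funext i; rw [div_eq_inv_mul]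
  rw [this, n2_smul, abs_of_pos (by positivity), inv_mul_cancel₀ h0.ne']

/-- key soft-thresholding lemma -/
lemma st_key (x : α → ℝ) (ω : ℝ) (hω0 : 0 ≤ ω)
    (hx : n2 x = 1) (hω : ω * Real.sqrt (Fintype.card α) < 1) :
    1 - ω * Real.sqrt (Fintype.card α) + ω ≤ ∑ i, x i * (st x ω i / n2 (st x ω)) := by
  set m : α → ℝ := fun i => max (|x i| - ω) 0 with hm
  have hm0 : ∀ i, 0 ≤ m i := fun i => le_max_right _ _
  set N := n2 (st x ω) with hN
  have hsq : ∀ i, st x ω i ^ 2 = m i ^ 2 := by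
    intro i
    rcases lt_trichotomy (x i) 0 with h | h | h
    · rw [st, Real.sign_of_neg h]; ring
    · simp [st, h, hm, Real.sign_zero, abs_of_nonneg, hω0]
    · rw [st, Real.sign_of_pos h]; ring
  have hNm : N = n2 m := by
    rw [hN, n2, n2]
    congr 1
    exact Finset.sum_congr rfl fun i _ => hsq i
  have hxs : ∀ i, x i * st x ω i = m i ^ 2 + ω * m i := by
    intro i
    have hsign : x i * Real.sign (x i) = |x i| := by
      rcases lt_trichotomy (x i) 0 with h | h | h
      · rw [Real.sign_of_neg h, abs_of_neg h]; ring
      · simp [h]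
      · rw [Real.sign_of_pos h, abs_of_pos h]; ring
    rw [st, ← mul_assoc, hsign]
    show |x i| * m i = m i ^ 2 + ω * m i
    rcases le_or_gt (|x i|) ω with h | h
    · have hz : m i = 0 := by simp [hm, sub_nonpos.mpr h]
      rw [hz]; ring
    · have hz : m i = |x i| - ω := by
        simp only [hm]; exact max_eq_left (le_of_lt (sub_pos.mpr h))
      rw [hz]; ring
  have hl1 : n2 m ≤ ∑ i, m i := by
    have h1 : ∑ i, m i ^ 2 ≤ (∑ i, m i) ^ 2 :=
      Finset.sum_sq_le_sq_sum_of_nonneg fun i _ => hm0 i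
    calc n2 m = Real.sqrt (∑ i, m i ^ 2) := rfl
      _ ≤ Real.sqrt ((∑ i, m i) ^ 2) := Real.sqrt_le_sqrt h1
      _ = |∑ i, m i| := Real.sqrt_sq_eq_abs _
      _ = ∑ i, m i := abs_of_nonneg (Finset.sum_nonneg fun i _ => hm0 i)
  have hcard : n2 (fun _ : α => (1:ℝ)) = Real.sqrt (Fintype.card α) := by
    simp [n2]
  have hcs : ∑ i, m i ≤ n2 m * Real.sqrt (Fintype.card α) := by
    have := inner_le_n2 m (fun _ : α => (1:ℝ))
    simpa [hcard] using this
  have hsum1 : ∑ i, x i ^ 2 = 1 := by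
    have := sq_n2 x; rw [hx] at this; simpa using this.symm
  have hpt : ∀ i, x i ^ 2 ≤ (m i + ω) ^ 2 := by
    intro i
    have h1 : |x i| ≤ m i + ω := by
      have : |x i| - ω ≤ m i := le_max_left _ _
      linarith
    calc x i ^ 2 = |x i| ^ 2 := (sq_abs _).symm
      _ ≤ (m i + ω) ^ 2 := by
          apply pow_le_pow_left₀ (abs_nonneg _) h1
  have hNsq : N ^ 2 = ∑ i, m i ^ 2 := by rw [hNm]; exact sq_n2 m
  have hN0 : 0 ≤ N := n2_nonneg_s18 _
  have hcard0 : (0:ℝ) ≤ Real.sqrt (Fintype.card α) := Real.sqrt_nonneg _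
  have hsqcard : Real.sqrt (Fintype.card α) ^ 2 = Fintype.card α :=
    Real.sq_sqrt (by positivity)
  have hexp : ∑ i, (m i + ω) ^ 2
      = ∑ i, m i ^ 2 + 2 * ω * (∑ i, m i) + (Fintype.card α) * ω ^ 2 := by
    have hpw : ∀ i : α, (m i + ω) ^ 2 = m i ^ 2 + 2 * ω * m i + ω ^ 2 := fun i => by ring
    simp_rw [hpw]
    rw [Finset.sum_add_distrib, Finset.sum_add_distrib, ← Finset.mul_sum, Finset.sum_const]
    simp [Finset.card_univ]
  have hcs' : ∑ i, m i ≤ N * Real.sqrt (Fintype.card α) := by rw [hNm]; exact hcs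
  have hl1' : N ≤ ∑ i, m i := by rw [hNm]; exact hl1
  have hlow : 1 ≤ N + ω * Real.sqrt (Fintype.card α) := by
    have h2 : (1:ℝ) ≤ (N + ω * Real.sqrt (Fintype.card α)) ^ 2 := by
      have hs : ∑ i, x i ^ 2 ≤ ∑ i, (m i + ω) ^ 2 :=
        Finset.sum_le_sum fun i _ => hpt i
      nlinarith [hs, hexp, hcs', hNsq, hsum1, mul_nonneg hω0 hcard0]
    nlinarith [hN0, mul_nonneg hω0 hcard0]
  have hNpos : 0 < N := by nlinarith
  have hfin : ∑ i, x i * (st x ω i / N) = ((∑ i, m i ^ 2) + ω * (∑ i, m i)) / N := by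
    simp_rw [← mul_div_assoc]
    rw [← Finset.sum_div]
    congr 1
    simp_rw [hxs]
    rw [Finset.sum_add_distrib, ← Finset.mul_sum]
  rw [hfin, le_div_iff₀ hNpos]
  have e1 : (1 - ω * Real.sqrt (Fintype.card α)) * N ≤ N * N := by nlinarith
  have e2 : ω * N ≤ ω * ∑ i, m i := mul_le_mul_of_nonneg_left hl1' hω0
  nlinarith [hNsq]
end Basics
section MatrixBound
variable {m p : Type*} [Fintype m] [Fintype p]

lemma lam_nonneg (M : Matrix m p ℝ) (lam : ℝ)
    (hl : IsGreatest {v : ℝ | ∃ (u : m → ℝ) (w : p → ℝ),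
      n2 u = 1 ∧ n2 w = 1 ∧ v = ∑ i, ∑ J, u i * M i J * w J} lam) : 0 ≤ lam := by
  obtain ⟨u, w, hu, hw, hv⟩ := hl.1
  have h2 : -lam ∈ {v : ℝ | ∃ (u : m → ℝ) (w : p → ℝ),
      n2 u = 1 ∧ n2 w = 1 ∧ v = ∑ i, ∑ J, u i * M i J * w J} := by
    refine ⟨fun i => -u i, w, ?_, hw, ?_⟩
    · simpa [n2] using hu
    · rw [hv, ← Finset.sum_neg_distrib]
      exact Finset.sum_congr rfl fun i _ => by
        rw [← Finset.sum_neg_distrib]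
        exact Finset.sum_congr rfl fun J _ => by ring
  have := hl.2 h2
  linarith

lemma frob_le [DecidableEq m] (M : Matrix m p ℝ) (lam : ℝ)
    (hl : IsGreatest {v : ℝ | ∃ (u : m → ℝ) (w : p → ℝ),
      n2 u = 1 ∧ n2 w = 1 ∧ v = ∑ i, ∑ J, u i * M i J * w J} lam) :
    Real.sqrt (∑ i, ∑ J, M i J ^ 2) ≤ Real.sqrt (Fintype.card m) * lam := by
  have h0 := lam_nonneg M lam hl
  have hrow : ∀ i, ∑ J, M i J ^ 2 ≤ lam ^ 2 := by
    intro i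
    by_cases h : (fun J => M i J) = 0
    · have : ∀ J, M i J = 0 := fun J => congrFun h J
      simp only [this]
      simp
      positivity
    · set N := n2 (fun J => M i J) with hN
      have hNpos : 0 < N :=
        lt_of_le_of_ne (n2_nonneg_s18 _) (fun e => h ((n2_eq_zero_iff _).mp e.symm))
      have hNsq : N ^ 2 = ∑ J, M i J ^ 2 := sq_n2 _
      have hmem : N ∈ {v : ℝ | ∃ (u : m → ℝ) (w : p → ℝ),
          n2 u = 1 ∧ n2 w = 1 ∧ v = ∑ i, ∑ J, u i * M i J * w J} := by
        refine ⟨fun i' => if i' = i then 1 else 0, fun J => M i J / N, ?_, n2_one_div _ h, ?_⟩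
        · apply n2_eq_one_of
          simp [ite_pow]
        · have hz : ∀ i', ∑ J, (if i' = i then (1:ℝ) else 0) * M i' J * (M i J / N)
              = if i' = i then ∑ J, M i' J * (M i J / N) else 0 := by
            intro i'
            split_ifs with h' <;> simp
          simp only [hz]
          rw [Finset.sum_ite_eq' Finset.univ i]
          simp only [Finset.mem_univ, if_true]
          have hss : ∑ J, M i J * (M i J / N) = (∑ J, M i J ^ 2) / N := by
            rw [Finset.sum_div]
            exact Finset.sum_congr rfl fun J _ => by ring
          rw [hss, ← hNsq, sq]
          field_simp
      have hle := hl.2 hmem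
      calc ∑ J, M i J ^ 2 = N ^ 2 := hNsq.symm
        _ ≤ lam ^ 2 := by nlinarith
  have hsum : ∑ i, ∑ J, M i J ^ 2 ≤ (Fintype.card m) * lam ^ 2 := by
    calc ∑ i, ∑ J, M i J ^ 2 ≤ ∑ _i : m, lam ^ 2 := Finset.sum_le_sum fun i _ => hrow i
      _ = (Fintype.card m) * lam ^ 2 := by
        rw [Finset.sum_const, Finset.card_univ, nsmul_eq_mul]
  calc Real.sqrt (∑ i, ∑ J, M i J ^ 2) ≤ Real.sqrt ((Fintype.card m) * lam ^ 2) :=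
      Real.sqrt_le_sqrt hsum
    _ = Real.sqrt (Fintype.card m) * lam := by
      rw [Real.sqrt_mul (by positivity), Real.sqrt_sq h0]

end MatrixBound
section Glue
variable {d : ℕ} {n : Fin d → ℕ}

lemma glue_lt (j : Fin d) (I : Lt n j) (i : Fin (n j)) (J : Gt n j)
    (k : {k : Fin d // k.val < j.val}) : glue j I i J k.1 = I k := by
  simp only [glue, dif_pos k.2]

lemma glue_gt (j : Fin d) (I : Lt n j) (i : Fin (n j)) (J : Gt n j)
    (k : {k : Fin d // j.val < k.val}) : glue j I i J k.1 = J k := by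
  have h1 : ¬ (k.1.val < j.val) := by omega
  simp only [glue, dif_neg h1, dif_pos k.2]

lemma glue_self (j : Fin d) (I : Lt n j) (i : Fin (n j)) (J : Gt n j) :
    glue j I i J j = i := by
  simp only [glue, dif_neg (lt_irrefl j.val)]
  exact cast_eq_iff_heq.mpr HEq.rfl

lemma glue_bij (j : Fin d) :
    Function.Bijective (fun p : Lt n j × Fin (n j) × Gt n j => glue j p.1 p.2.1 p.2.2) := by
  constructor
  · rintro ⟨I, i, J⟩ ⟨I', i', J'⟩ h
    simp only at h
    simp only [Prod.mk.injEq]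
    refine ⟨funext fun k => ?_, ?_, funext fun k => ?_⟩
    · have := congrFun h k.1
      rwa [glue_lt, glue_lt] at this
    · have := congrFun h j
      rwa [glue_self, glue_self] at this
    · have := congrFun h k.1
      rwa [glue_gt, glue_gt] at this
  · intro f
    refine ⟨⟨fun k => f k.1, f j, fun k => f k.1⟩, funext fun k => ?_⟩
    simp only [glue]
    split_ifs with h h'
    · rfl
    · rfl
    · have e : j = k := Fin.ext (le_antisymm (not_lt.mp h) (not_lt.mp h'))
      subst e
      exact cast_eq_iff_heq.mpr HEq.rfl

lemma sum_glue (j : Fin d) (F : ((k : Fin d) → Fin (n k)) → ℝ) :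
    ∑ f, F f = ∑ I : Lt n j, ∑ i, ∑ J : Gt n j, F (glue j I i J) := by
  have h2 : (∑ I : Lt n j, ∑ i, ∑ J : Gt n j, F (glue j I i J))
      = ∑ p : Lt n j × Fin (n j) × Gt n j, F (glue j p.1 p.2.1 p.2.2) := by
    rw [Fintype.sum_prod_type]
    exact Finset.sum_congr rfl fun I _ => by rw [Fintype.sum_prod_type]
  rw [h2]
  exact (Fintype.sum_bijective _ (glue_bij j) _ F fun p => rfl).symm

lemma prod_split (j : Fin d) (g : Fin d → ℝ) :
    ∏ k, g k = (∏ k : {k : Fin d // k.val < j.val}, g k.1) * g j *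
      ∏ k : {k : Fin d // j.val < k.val}, g k.1 := by
  classical
  rw [← Finset.prod_filter_mul_prod_filter_not Finset.univ (fun k : Fin d => k.val < j.val) g]
  have h1 : ∏ k ∈ Finset.univ.filter (fun k : Fin d => k.val < j.val), g k
      = ∏ k : {k : Fin d // k.val < j.val}, g k.1 := by
    rw [← Finset.prod_subtype (Finset.univ.filter (fun k : Fin d => k.val < j.val))
      (fun k => by simp) g]
  have h2 : Finset.univ.filter (fun k : Fin d => ¬ k.val < j.val)
      = insert j (Finset.univ.filter (fun k : Fin d => j.val < k.val)) := by
    ext k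
    simp [Fin.ext_iff]
    omega
  have h3 : ∏ k ∈ Finset.univ.filter (fun k : Fin d => j.val < k.val), g k
      = ∏ k : {k : Fin d // j.val < k.val}, g k.1 := by
    rw [← Finset.prod_subtype (Finset.univ.filter (fun k : Fin d => j.val < k.val))
      (fun k => by simp) g]
  rw [h2, Finset.prod_insert (by simp), h1, h3]
  ring

lemma prod_glue (j : Fin d) (I : Lt n j) (i : Fin (n j)) (J : Gt n j)
    (g : (k : Fin d) → Fin (n k) → ℝ) :
    ∏ k, g k (glue j I i J k)
      = (∏ k : {k : Fin d // k.val < j.val}, g k.1 (I k)) * g j i *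
        ∏ k : {k : Fin d // j.val < k.val}, g k.1 (J k) := by
  rw [prod_split j (fun k => g k (glue j I i J k))]
  rw [glue_self]
  congr 1
  congr 1
  · exact Finset.prod_congr rfl fun k _ => by rw [glue_lt]
  · exact Finset.prod_congr rfl fun k _ => by rw [glue_gt]

end Glue

section Succ
variable {d : ℕ} {n : Fin d → ℕ}

/-- decompose a prefix of length `j+1` into (prefix of length j, j-th entry) -/
lemma ltsucc_bij (j j' : Fin d) (hjj : j'.val = j.val + 1) :
    Function.Bijective (fun I' : Lt n j' =>
      ((fun k => I' ⟨k.1, by omega⟩, I' ⟨j, by omega⟩) : Lt n j × Fin (n j))) := by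
  constructor
  · intro I₁ I₂ h
    simp only [Prod.mk.injEq] at h
    funext k
    rcases Nat.lt_or_ge k.1.val j.val with hk | hk
    · exact congrFun h.1 ⟨k.1, hk⟩
    · have hk2 := k.2
      have hjlt : j.val < j'.val := by omega
      have hke : j.val = k.1.val := by omega
      have e : (⟨j, hjlt⟩ : {k : Fin d // k.val < j'.val}) = k :=
        Subtype.ext (Fin.ext hke)
      rw [← e]
      exact h.2
  · rintro ⟨I, i⟩
    refine ⟨fun k => if h : k.1.val < j.val then I ⟨k.1, h⟩ else
      cast (congrArg (fun t => Fin (n t))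
        (Fin.ext (by omega : j.val = k.1.val) : j = k.1)) i, ?_⟩
    simp only [Prod.mk.injEq]
    constructor
    · funext k
      exact dif_pos k.2
    · rw [dif_neg (lt_irrefl j.val)]
      exact cast_eq_iff_heq.mpr HEq.rfl

/-- decompose a suffix starting after `j` into (the `j+1`-entry, suffix after `j+1`) -/
lemma gtsucc_bij (j j' : Fin d) (hjj : j'.val = j.val + 1) :
    Function.Bijective (fun J : Gt n j =>
      ((J ⟨j', by omega⟩, fun k => J ⟨k.1, by omega⟩) : Fin (n j') × Gt n j')) := by
  constructor
  · intro J₁ J₂ h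
    simp only [Prod.mk.injEq] at h
    funext k
    rcases lt_or_eq_of_le (by omega : j'.val ≤ k.1.val) with hk | hk
    · exact congrFun h.2 ⟨k.1, hk⟩
    · have e : (⟨j', by omega⟩ : {k : Fin d // j.val < k.val}) = k :=
        Subtype.ext (Fin.ext hk)
      rw [← e]
      exact h.1
  · rintro ⟨i', J'⟩
    refine ⟨fun k => if h : j'.val < k.1.val then J' ⟨k.1, h⟩ else
      cast (congrArg (fun t => Fin (n t))
        (Fin.ext (by omega : j'.val = k.1.val) : j' = k.1)) i', ?_⟩
    simp only [Prod.mk.injEq]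
    constructor
    · rw [dif_neg (lt_irrefl j'.val)]
      exact cast_eq_iff_heq.mpr HEq.rfl
    · funext k
      exact dif_pos k.2

/-- splitting a product over indices `< j+1` -/
lemma prod_ltsucc (j j' : Fin d) (hjj : j'.val = j.val + 1)
    (g : (k : {k : Fin d // k.val < j'.val}) → ℝ) :
    ∏ k, g k = (∏ k : {k : Fin d // k.val < j.val}, g ⟨k.1, by omega⟩) * g ⟨j, by omega⟩ := by
  classical
  have e : Function.Bijective (fun s : {k : Fin d // k.val < j.val} ⊕ Unit =>
      (Sum.elim (fun k => (⟨k.1, by omega⟩ : {k : Fin d // k.val < j'.val}))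
        (fun _ => ⟨j, by omega⟩) s)) := by
    constructor
    · rintro (k₁ | ⟨⟩) (k₂ | ⟨⟩) h <;> simp only [Sum.elim_inl, Sum.elim_inr] at h
      · have h' : k₁.1 = k₂.1 := Subtype.mk_eq_mk.mp h
        rw [Sum.inl.injEq]
        exact Subtype.ext h'
      · exfalso
        have h' : k₁.1 = j := Subtype.mk_eq_mk.mp h
        have := k₁.2
        rw [Fin.ext_iff] at h'
        omega
      · exfalso
        have h' : (j : Fin d) = k₂.1 := Subtype.mk_eq_mk.mp h
        have := k₂.2
        rw [Fin.ext_iff] at h'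
        omega
      · rfl
    · rintro ⟨k, hk⟩
      rcases Nat.lt_or_ge k.val j.val with h | h
      · exact ⟨Sum.inl ⟨k, h⟩, rfl⟩
      · exact ⟨Sum.inr (), Subtype.ext (Fin.ext (show j.val = k.val by omega))⟩
  rw [← Fintype.prod_bijective _ e _ g fun s => rfl]
  rw [Fintype.prod_sum_type]
  simp

/-- the key recursion: `A_{j+1} = reshape(A_jᵀ x_j)` -/
lemma Mj_succ (A : ((k : Fin d) → Fin (n k)) → ℝ) (x : (k : Fin d) → Fin (n k) → ℝ)
    (j j' : Fin d) (hjj : j'.val = j.val + 1) (J : Gt n j) :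
    Mj A x j' (J ⟨j', by omega⟩) (fun k => J ⟨k.1, by omega⟩)
      = ∑ i, Mj A x j i J * x j i := by
  simp only [Mj, Matrix.of_apply]
  have h2 : ∀ i : Fin (n j), (∑ I : Lt n j, A (glue j I i J) *
      ∏ k : {k : Fin d // k.val < j.val}, x k (I k)) * x j i
      = ∑ I : Lt n j, A (glue j I i J) *
        ((∏ k : {k : Fin d // k.val < j.val}, x k (I k)) * x j i) := by
    intro i
    rw [Finset.sum_mul]
    exact Finset.sum_congr rfl fun I _ => by ring
  simp only [h2]
  have h3 : (∑ i, ∑ I : Lt n j, A (glue j I i J) *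
        ((∏ k : {k : Fin d // k.val < j.val}, x k (I k)) * x j i))
      = ∑ p : Lt n j × Fin (n j), A (glue j p.1 p.2 J) *
        ((∏ k : {k : Fin d // k.val < j.val}, x k (p.1 k)) * x j p.2) := by
    rw [Fintype.sum_prod_type]
    exact Finset.sum_comm
  rw [h3]
  refine Fintype.sum_bijective _ (ltsucc_bij j j' hjj) _ _ fun I' => ?_
  have ha : glue j' I' (J ⟨j', by omega⟩) (fun k => J ⟨k.1, by omega⟩)
      = glue j (fun k => I' ⟨k.1, by omega⟩) (I' ⟨j, by omega⟩) J := by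
    funext k
    rcases Nat.lt_trichotomy k.val j.val with hk | hk | hk
    · have e1 : glue j' I' (J ⟨j', by omega⟩) (fun k => J ⟨k.1, by omega⟩) k
          = I' ⟨k, by omega⟩ :=
        glue_lt j' I' (J ⟨j', by omega⟩) (fun k => J ⟨k.1, by omega⟩) ⟨k, by omega⟩
      have e2 : glue j (fun k => I' ⟨k.1, by omega⟩) (I' ⟨j, by omega⟩) J k
          = I' ⟨k, by omega⟩ :=
        glue_lt j (fun k => I' ⟨k.1, by omega⟩) (I' ⟨j, by omega⟩) J ⟨k, hk⟩
      rw [e1, e2]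
    · have e : j = k := Fin.ext hk.symm
      subst e
      rw [glue_self]
      exact glue_lt j' I' (J ⟨j', by omega⟩) (fun k => J ⟨k.1, by omega⟩) ⟨j, by omega⟩
    · rcases Nat.lt_or_ge (j'.val) k.val with hk' | hk'
      · have e1 : glue j' I' (J ⟨j', by omega⟩) (fun k => J ⟨k.1, by omega⟩) k
            = J ⟨k, by omega⟩ :=
          glue_gt j' I' (J ⟨j', by omega⟩) (fun k => J ⟨k.1, by omega⟩) ⟨k, hk'⟩
        have e2 : glue j (fun k => I' ⟨k.1, by omega⟩) (I' ⟨j, by omega⟩) J k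
            = J ⟨k, by omega⟩ :=
          glue_gt j (fun k => I' ⟨k.1, by omega⟩) (I' ⟨j, by omega⟩) J ⟨k, hk⟩
        rw [e1, e2]
      · have e : j' = k := Fin.ext (by omega)
        subst e
        rw [glue_self]
        exact (glue_gt j (fun k => I' ⟨k.1, by omega⟩) (I' ⟨j, by omega⟩) J ⟨j', by omega⟩).symm
  rw [ha]
  congr 1
  exact prod_ltsucc j j' hjj _

end Succ

lemma sqrt_prod {β : Type*} (s : Finset β) (f : β → ℝ) (hf : ∀ i ∈ s, 0 ≤ f i) :
    Real.sqrt (∏ i ∈ s, f i) = ∏ i ∈ s, Real.sqrt (f i) := by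
  induction s using Finset.cons_induction with
  | empty => simp
  | cons a s ha ih =>
    rw [Finset.prod_cons, Finset.prod_cons,
      Real.sqrt_mul (hf a (Finset.mem_cons_self a s)),
      ih fun i hi => hf i (Finset.mem_cons_of_mem hi)]
/-- Approximation bound for the SVD-based Algorithm V1. -/
theorem stmt18 {d : ℕ} (hd : 3 ≤ d) (n : Fin d → ℕ)
    (A : ((k : Fin d) → Fin (n k)) → ℝ) (ω : Fin d → ℝ)
    (hω0 : ∀ j, 0 ≤ ω j) (hω : ∀ j, ω j < 1 / Real.sqrt (n j))
    (x xs : (k : Fin d) → Fin (n k) → ℝ) (lam : Fin d → ℝ)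
    (ys : (j : Fin d) → Gt n j → ℝ)
    -- steps 1 and 2 of Algorithm V1 (matrices A_1, …, A_{d-1}; 0-based j = 0, …, d-2):
    -- (xs j, ys j) is a top unit singular pair of A_j with top singular value lam j,
    -- and x j = N(xs j, ω j) is its soft-thresholded normalization
    (hstep : ∀ j : Fin d, j.val < d - 1 →
      n2 (xs j) = 1 ∧ n2 (ys j) = 1 ∧
      (Mj A x j).mulVec (ys j) = lam j • xs j ∧
      (Mj A x j).transpose.mulVec (xs j) = lam j • ys j ∧
      IsGreatest {v : ℝ | ∃ (u : Fin (n j) → ℝ) (w : Gt n j → ℝ),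
        n2 u = 1 ∧ n2 w = 1 ∧ v = ∑ i, ∑ J, u i * Mj A x j i J * w J} (lam j) ∧
      x j = fun i => st (xs j) (ω j) i / n2 (st (xs j) (ω j)))
    -- step 3: for the last mode, xs j = A_{d-1}ᵀ x_{d-1}^ω / ‖·‖ and x j = N(xs j, ω j)
    (hlast : ∀ j : Fin d, ∀ hj : j.val = d - 1,
      ∃ v : Fin (n j) → ℝ,
        (∀ i, v i = Mj A x j i (fun k => absurd k.2 (by have := k.1.isLt; omega))) ∧
        xs j = (fun i => v i / n2 v) ∧
        x j = fun i => st (xs j) (ω j) i / n2 (st (xs j) (ω j))) :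
    ((∏ j, (1 - ω j * Real.sqrt (n j) + ω j)) /
        Real.sqrt (∏ j ∈ Finset.univ.filter (fun j : Fin d => 1 ≤ j.val ∧ j.val ≤ d - 2),
          ((n j : ℝ)))) * lam ⟨0, by omega⟩
      ≤ ∑ J, A J * ∏ k, x k (J k) ∧
    ∀ xt : (k : Fin d) → Fin (n k) → ℝ, (∀ k, n2 (xt k) = 1) →
      ((∏ j, (1 - ω j * Real.sqrt (n j) + ω j)) /
        Real.sqrt (∏ j ∈ Finset.univ.filter (fun j : Fin d => 1 ≤ j.val ∧ j.val ≤ d - 2),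
          ((n j : ℝ)))) * (∑ J, A J * ∏ k, xt k (J k))
      ≤ ((∏ j, (1 - ω j * Real.sqrt (n j) + ω j)) /
        Real.sqrt (∏ j ∈ Finset.univ.filter (fun j : Fin d => 1 ≤ j.val ∧ j.val ≤ d - 2),
          ((n j : ℝ)))) * lam ⟨0, by omega⟩ := by
  classical
  obtain ⟨j0, hj0v⟩ : ∃ j : Fin d, j.val = 0 := ⟨⟨0, by omega⟩, rfl⟩
  obtain ⟨jd2, hjd2v⟩ : ∃ j : Fin d, j.val = d - 2 := ⟨⟨d - 2, by omega⟩, rfl⟩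
  obtain ⟨jlast, hjlastv⟩ : ∃ j : Fin d, j.val = d - 1 := ⟨⟨d - 1, by omega⟩, rfl⟩
  have hmk : ∀ (m : ℕ) (h : m < d) (j : Fin d), j.val = m → (⟨m, h⟩ : Fin d) = j :=
    fun m h j hj => Fin.ext (by rw [hj])
  have h00 := hstep j0 (by omega)
  have hgr0 := h00.2.2.2.2.1
  -- all dimensions are positive
  have hn : ∀ k : Fin d, 0 < n k := by
    intro k
    rcases Nat.eq_zero_or_pos k.val with hk | hk
    · have hkj : k = j0 := Fin.ext (by omega)
      rw [hkj]
      exact Fin.pos_iff_nonempty.mpr (nonempty_of_n2_eq_one _ h00.1)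
    · obtain ⟨f⟩ := nonempty_of_n2_eq_one _ h00.2.1
      exact Fin.pos (f ⟨k, by omega⟩)
  have hsq : ∀ k : Fin d, 0 < Real.sqrt (n k) := fun k =>
    Real.sqrt_pos.mpr (by exact_mod_cast hn k)
  have hωs : ∀ k : Fin d, ω k * Real.sqrt (n k) < 1 := fun k =>
    (lt_div_iff₀ (hsq k)).mp (hω k)
  set cf : Fin d → ℝ := fun j => 1 - ω j * Real.sqrt (n j) + ω j with hcf
  have hcf0 : ∀ k, 0 < cf k := fun k => by
    have h1 := hωs k; have h2 := hω0 k; simp only [hcf]; linarith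
  -- the soft-thresholding inner-product bound
  have hip : ∀ j : Fin d, (x j = fun i => st (xs j) (ω j) i / n2 (st (xs j) (ω j))) →
      n2 (xs j) = 1 → cf j ≤ ∑ i, xs j i * x j i := by
    intro j hxj hxs1
    rw [hxj]
    have h := st_key (xs j) (ω j) (hω0 j) hxs1 (by simpa using hωs j)
    simpa using h
  -- one step of the chain
  have step : ∀ (j j' : Fin d), j'.val = j.val + 1 → j'.val < d - 1 →
      cf j * lam j ≤ Real.sqrt (n j') * lam j' := by
    intro j j' hjj hj'
    obtain ⟨hxs1, hys1, hMy, _hMx, hgr, hxj⟩ := hstep j (by omega)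
    obtain ⟨_, _, _, _, hgr', _⟩ := hstep j' hj'
    have hipj := hip j hxj hxs1
    have hid : ∑ J : Gt n j, (∑ i, Mj A x j i J * x j i) * ys j J
        = lam j * ∑ i, xs j i * x j i := by
      calc ∑ J : Gt n j, (∑ i, Mj A x j i J * x j i) * ys j J
          = ∑ J : Gt n j, ∑ i, (Mj A x j i J * ys j J) * x j i := by
            refine Finset.sum_congr rfl fun J _ => ?_
            rw [Finset.sum_mul]
            exact Finset.sum_congr rfl fun i _ => by ring
        _ = ∑ i, ∑ J : Gt n j, (Mj A x j i J * ys j J) * x j i := Finset.sum_comm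
        _ = ∑ i, (lam j * xs j i) * x j i := by
            refine Finset.sum_congr rfl fun i _ => ?_
            rw [← Finset.sum_mul]
            congr 1
            have h := congrFun hMy i
            simpa [Matrix.mulVec, dotProduct] using h
        _ = lam j * ∑ i, xs j i * x j i := by
            rw [Finset.mul_sum]
            exact Finset.sum_congr rfl fun i _ => by ring
    have hcs : ∑ J : Gt n j, (∑ i, Mj A x j i J * x j i) * ys j J
        ≤ n2 (fun J : Gt n j => ∑ i, Mj A x j i J * x j i) := by
      have h := inner_le_n2 (fun J : Gt n j => ∑ i, Mj A x j i J * x j i) (ys j)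
      rwa [hys1, mul_one] at h
    have hfrob : n2 (fun J : Gt n j => ∑ i, Mj A x j i J * x j i)
        = Real.sqrt (∑ i', ∑ J', Mj A x j' i' J' ^ 2) := by
      rw [n2]
      congr 1
      have hb := Fintype.sum_bijective _ (gtsucc_bij (n := n) j j' hjj)
        (fun J : Gt n j => (∑ i, Mj A x j i J * x j i) ^ 2)
        (fun p : Fin (n j') × Gt n j' => Mj A x j' p.1 p.2 ^ 2)
        (fun J => by dsimp only; rw [← Mj_succ A x j j' hjj J])
      rw [hb, Fintype.sum_prod_type]
    have hfl := frob_le (Mj A x j') (lam j') hgr'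
    rw [Fintype.card_fin] at hfl
    have hlj : 0 ≤ lam j := lam_nonneg _ _ hgr
    calc cf j * lam j ≤ (∑ i, xs j i * x j i) * lam j :=
          mul_le_mul_of_nonneg_right hipj hlj
      _ = lam j * ∑ i, xs j i * x j i := mul_comm _ _
      _ = ∑ J : Gt n j, (∑ i, Mj A x j i J * x j i) * ys j J := hid.symm
      _ ≤ n2 (fun J : Gt n j => ∑ i, Mj A x j i J * x j i) := hcs
      _ = Real.sqrt (∑ i', ∑ J', Mj A x j' i' J' ^ 2) := hfrob
      _ ≤ Real.sqrt (n j') * lam j' := hfl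
  -- the chain of inequalities
  set cfn : ℕ → ℝ := fun k => if h : k < d then cf ⟨k, h⟩ else 1 with hcfn
  set sqn : ℕ → ℝ := fun k => if h : k < d then Real.sqrt (n ⟨k, h⟩) else 1 with hsqn
  have hcfn0 : ∀ k, 0 < cfn k := by
    intro k; simp only [hcfn]; split
    · exact hcf0 _
    · norm_num
  have hsqn0 : ∀ k, 0 < sqn k := by
    intro k; simp only [hsqn]; split
    · exact hsq _
    · norm_num
  have chain : ∀ t : ℕ, ∀ ht : t ≤ d - 2,
      (∏ k ∈ Finset.range t, cfn k) * lam j0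
        ≤ (∏ k ∈ Finset.range t, sqn (k + 1)) * lam ⟨t, by omega⟩ := by
    intro t
    induction t with
    | zero =>
      intro _
      rw [Finset.prod_range_zero, Finset.prod_range_zero, one_mul, one_mul]
      exact le_of_eq (congrArg lam (hmk 0 _ j0 hj0v).symm)
    | succ t ih =>
      intro ht
      have h1 := ih (by omega)
      have hst := step ⟨t, by omega⟩ ⟨t + 1, by omega⟩ rfl (by show t + 1 < d - 1; omega)
      have hS0 : (0:ℝ) ≤ ∏ k ∈ Finset.range t, sqn (k + 1) :=
        le_of_lt (Finset.prod_pos fun k _ => hsqn0 _)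
      rw [Finset.prod_range_succ, Finset.prod_range_succ]
      have hcfnt : cfn t = cf ⟨t, by omega⟩ := by simp only [hcfn]; rw [dif_pos (by omega : t < d)]
      have hsqnt : sqn (t + 1) = Real.sqrt (n ⟨t + 1, by omega⟩) := by
        simp only [hsqn]; rw [dif_pos (by omega : t + 1 < d)]
      calc (∏ k ∈ Finset.range t, cfn k) * cfn t * lam j0
          = cfn t * ((∏ k ∈ Finset.range t, cfn k) * lam j0) := by ring
        _ ≤ cfn t * ((∏ k ∈ Finset.range t, sqn (k + 1)) * lam ⟨t, by omega⟩) :=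
            mul_le_mul_of_nonneg_left h1 (hcfn0 t).le
        _ = (∏ k ∈ Finset.range t, sqn (k + 1)) *
            (cf ⟨t, by omega⟩ * lam ⟨t, by omega⟩) := by rw [hcfnt]; ring
        _ ≤ (∏ k ∈ Finset.range t, sqn (k + 1)) *
            (Real.sqrt (n ⟨t + 1, by omega⟩) * lam ⟨t + 1, by omega⟩) :=
            mul_le_mul_of_nonneg_left hst hS0
        _ = (∏ k ∈ Finset.range t, sqn (k + 1)) * sqn (t + 1) * lam ⟨t + 1, by omega⟩ := by
            rw [hsqnt]; ring
  -- last-mode data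
  obtain ⟨v, hv1, hv2, hv3⟩ := hlast jlast hjlastv
  haveI hempty : IsEmpty {k : Fin d // jlast.val < k.val} :=
    ⟨fun k => by
      have h1 := k.2
      have h2 := k.1.isLt
      omega⟩
  haveI hempty0 : IsEmpty {k : Fin d // k.val < j0.val} :=
    ⟨fun k => by
      have h1 := k.2
      omega⟩
  -- the contracted value identity
  have hF : ∑ J, A J * ∏ k, x k (J k) = ∑ i, v i * x jlast i := by
    calc ∑ J, A J * ∏ k, x k (J k)
        = ∑ I : Lt n jlast, ∑ i, ∑ Jg : Gt n jlast,
            A (glue jlast I i Jg) * ∏ k, x k (glue jlast I i Jg k) :=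
          sum_glue jlast _
      _ = ∑ I : Lt n jlast, ∑ i,
            (A (glue jlast I i default) *
              ∏ k : {k : Fin d // k.val < jlast.val}, x k.1 (I k)) * x jlast i := by
          refine Finset.sum_congr rfl fun I _ => Finset.sum_congr rfl fun i _ => ?_
          rw [Fintype.sum_unique, prod_glue,
            Fintype.prod_empty (fun k : {k : Fin d // jlast.val < k.val} =>
              x k.1 ((default : Gt n jlast) k))]
          ring
      _ = ∑ i, (∑ I : Lt n jlast,
            A (glue jlast I i default) *
              ∏ k : {k : Fin d // k.val < jlast.val}, x k.1 (I k)) * x jlast i := by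
          rw [Finset.sum_comm]
          exact Finset.sum_congr rfl fun i _ => (Finset.sum_mul _ _ _).symm
      _ = ∑ i, v i * x jlast i := by
          refine Finset.sum_congr rfl fun i _ => ?_
          congr 1
          show Mj A x jlast i default = v i
          rw [hv1 i]
          exact congrArg _ (Subsingleton.elim _ _)
  -- norm transfer for the last matrix
  have hjj2 : jlast.val = jd2.val + 1 := by omega
  obtain ⟨hxs2, hys2, hMy2, _hMx2, hgr2, hxj2⟩ := hstep jd2 (by omega)
  have hnv : cf jd2 * lam jd2 ≤ n2 v := by
    have hipj := hip jd2 hxj2 hxs2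
    have hid : ∑ J : Gt n jd2, (∑ i, Mj A x jd2 i J * x jd2 i) * ys jd2 J
        = lam jd2 * ∑ i, xs jd2 i * x jd2 i := by
      calc ∑ J : Gt n jd2, (∑ i, Mj A x jd2 i J * x jd2 i) * ys jd2 J
          = ∑ J : Gt n jd2, ∑ i, (Mj A x jd2 i J * ys jd2 J) * x jd2 i := by
            refine Finset.sum_congr rfl fun J _ => ?_
            rw [Finset.sum_mul]
            exact Finset.sum_congr rfl fun i _ => by ring
        _ = ∑ i, ∑ J : Gt n jd2, (Mj A x jd2 i J * ys jd2 J) * x jd2 i := Finset.sum_comm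
        _ = ∑ i, (lam jd2 * xs jd2 i) * x jd2 i := by
            refine Finset.sum_congr rfl fun i _ => ?_
            rw [← Finset.sum_mul]
            congr 1
            have h := congrFun hMy2 i
            simpa [Matrix.mulVec, dotProduct] using h
        _ = lam jd2 * ∑ i, xs jd2 i * x jd2 i := by
            rw [Finset.mul_sum]
            exact Finset.sum_congr rfl fun i _ => by ring
    have hcs : ∑ J : Gt n jd2, (∑ i, Mj A x jd2 i J * x jd2 i) * ys jd2 J
        ≤ n2 (fun J : Gt n jd2 => ∑ i, Mj A x jd2 i J * x jd2 i) := by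
      have h := inner_le_n2 (fun J : Gt n jd2 => ∑ i, Mj A x jd2 i J * x jd2 i) (ys jd2)
      rwa [hys2, mul_one] at h
    have htrans : n2 (fun J : Gt n jd2 => ∑ i, Mj A x jd2 i J * x jd2 i) = n2 v := by
      rw [n2, n2]
      congr 1
      have hb := Fintype.sum_bijective _ (gtsucc_bij (n := n) jd2 jlast hjj2)
        (fun J : Gt n jd2 => (∑ i, Mj A x jd2 i J * x jd2 i) ^ 2)
        (fun p : Fin (n jlast) × Gt n jlast => v p.1 ^ 2)
        (fun J => by
          dsimp only
          rw [← Mj_succ A x jd2 jlast hjj2 J]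
          congr 1
          rw [hv1]
          exact congrArg _ (Subsingleton.elim _ _))
      rw [hb, Fintype.sum_prod_type]
      exact Finset.sum_congr rfl fun i' _ => by rw [Fintype.sum_unique]
    have hlj : 0 ≤ lam jd2 := lam_nonneg _ _ hgr2
    calc cf jd2 * lam jd2 ≤ (∑ i, xs jd2 i * x jd2 i) * lam jd2 :=
          mul_le_mul_of_nonneg_right hipj hlj
      _ = lam jd2 * ∑ i, xs jd2 i * x jd2 i := mul_comm _ _
      _ = ∑ J : Gt n jd2, (∑ i, Mj A x jd2 i J * x jd2 i) * ys jd2 J := hid.symm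
      _ ≤ n2 (fun J : Gt n jd2 => ∑ i, Mj A x jd2 i J * x jd2 i) := hcs
      _ = n2 v := htrans
  -- final soft-thresholding step
  have hfinal : n2 v * cf jlast ≤ ∑ J, A J * ∏ k, x k (J k) := by
    rw [hF]
    by_cases hv0 : v = 0
    · have hz : n2 v = 0 := (n2_eq_zero_iff v).mpr hv0
      rw [hz, hv0]
      simp
    · have hnv1 : n2 (xs jlast) = 1 := by rw [hv2]; exact n2_one_div v hv0
      have hip2 := hip jlast hv3 hnv1
      have h0 : n2 v ≠ 0 := fun e => hv0 ((n2_eq_zero_iff v).mp e)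
      have hvi : ∀ i, v i = n2 v * xs jlast i := by
        intro i
        rw [hv2]
        field_simp
      calc n2 v * cf jlast ≤ n2 v * ∑ i, xs jlast i * x jlast i :=
            mul_le_mul_of_nonneg_left hip2 (n2_nonneg_s18 v)
        _ = ∑ i, v i * x jlast i := by
            rw [Finset.mul_sum]
            exact Finset.sum_congr rfl fun i _ => by rw [hvi i]; ring
  -- product splittings
  have hsplit : ∏ j, cf j = (∏ k ∈ Finset.range (d - 2), cfn k) * cf jd2 * cf jlast := by
    have h1 : ∏ j : Fin d, cf j = ∏ j : Fin d, cfn j.val :=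
      Finset.prod_congr rfl fun j _ => by
        simp only [hcfn]
        rw [dif_pos j.isLt]
    rw [h1, Fin.prod_univ_eq_prod_range cfn d]
    have hd' : d = d - 2 + 1 + 1 := by omega
    conv_lhs => rw [hd']
    rw [Finset.prod_range_succ, Finset.prod_range_succ]
    have e1 : cfn (d - 2) = cf jd2 := by
      simp only [hcfn]
      rw [dif_pos (by omega : d - 2 < d), hmk (d - 2) (by omega) jd2 hjd2v]
    have e2 : cfn (d - 2 + 1) = cf jlast := by
      simp only [hcfn]
      rw [dif_pos (by omega : d - 2 + 1 < d), hmk (d - 2 + 1) (by omega) jlast (by omega)]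
    rw [e1, e2]
  have hSsplit : Real.sqrt (∏ j ∈ Finset.univ.filter
        (fun j : Fin d => 1 ≤ j.val ∧ j.val ≤ d - 2), ((n j : ℝ)))
      = ∏ k ∈ Finset.range (d - 2), sqn (k + 1) := by
    rw [sqrt_prod _ _ (fun i _ => by positivity)]
    refine Finset.prod_bij' (fun (j : Fin d) _ => j.val - 1)
      (fun k hk => (⟨k + 1, by have := Finset.mem_range.mp hk; omega⟩ : Fin d))
      ?_ ?_ ?_ ?_ ?_
    · intro a ha
      simp only [Finset.mem_filter, Finset.mem_univ, true_and] at ha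
      simp only [Finset.mem_range]
      omega
    · intro k hk
      have := Finset.mem_range.mp hk
      simp only [Finset.mem_filter, Finset.mem_univ, true_and]
      omega
    · intro a ha
      simp only [Finset.mem_filter, Finset.mem_univ, true_and] at ha
      exact Fin.ext (show a.val - 1 + 1 = a.val by omega)
    · intro k hk
      show k + 1 - 1 = k
      omega
    · intro a ha
      simp only [Finset.mem_filter, Finset.mem_univ, true_and] at ha
      have he : a.val - 1 + 1 = a.val := by omega
      rw [he]
      simp only [hsqn]
      rw [dif_pos a.isLt]
  -- assembling
  have hS0 : (0:ℝ) < ∏ k ∈ Finset.range (d - 2), sqn (k + 1) :=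
    Finset.prod_pos fun k _ => hsqn0 _
  have hCfull0 : (0:ℝ) < ∏ j, cf j := Finset.prod_pos fun j _ => hcf0 j
  have hchain2 := chain (d - 2) le_rfl
  rw [hmk (d - 2) (by omega) jd2 hjd2v] at hchain2
  constructor
  · rw [hSsplit, hmk 0 (by omega) j0 hj0v, div_mul_eq_mul_div, div_le_iff₀ hS0]
    calc (∏ j, cf j) * lam j0
        = (cf jd2 * cf jlast) * ((∏ k ∈ Finset.range (d - 2), cfn k) * lam j0) := by
          rw [hsplit]; ring
      _ ≤ (cf jd2 * cf jlast) * ((∏ k ∈ Finset.range (d - 2), sqn (k + 1)) * lam jd2) := by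
          refine mul_le_mul_of_nonneg_left hchain2 ?_
          exact le_of_lt (mul_pos (hcf0 _) (hcf0 _))
      _ = ((∏ k ∈ Finset.range (d - 2), sqn (k + 1)) * cf jlast) * (cf jd2 * lam jd2) := by
          ring
      _ ≤ ((∏ k ∈ Finset.range (d - 2), sqn (k + 1)) * cf jlast) * n2 v := by
          refine mul_le_mul_of_nonneg_left hnv ?_
          exact le_of_lt (mul_pos hS0 (hcf0 _))
      _ = (∏ k ∈ Finset.range (d - 2), sqn (k + 1)) * (n2 v * cf jlast) := by ring
      _ ≤ (∏ k ∈ Finset.range (d - 2), sqn (k + 1)) * (∑ J, A J * ∏ k, x k (J k)) :=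
          mul_le_mul_of_nonneg_left hfinal hS0.le
      _ = (∑ J, A J * ∏ k, x k (J k)) * (∏ k ∈ Finset.range (d - 2), sqn (k + 1)) :=
          mul_comm _ _
  · intro xt hxt
    rw [hmk 0 (by omega) j0 hj0v]
    have hcoef : (0:ℝ) ≤ (∏ j, cf j) / Real.sqrt (∏ j ∈ Finset.univ.filter
        (fun j : Fin d => 1 ≤ j.val ∧ j.val ≤ d - 2), ((n j : ℝ))) :=
      div_nonneg hCfull0.le (Real.sqrt_nonneg _)
    refine mul_le_mul_of_nonneg_left ?_ hcoef
    have hMj0 : ∀ (i : Fin (n j0)) (J : Gt n j0), Mj A x j0 i J = A (glue j0 default i J) := by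
      intro i J
      show (∑ I : Lt n j0, A (glue j0 I i J) *
          ∏ k : {k : Fin d // k.val < j0.val}, x k.1 (I k)) = A (glue j0 default i J)
      rw [Fintype.sum_unique, Fintype.prod_empty, mul_one]
    have hw : n2 (fun J : Gt n j0 => ∏ k : {k : Fin d // j0.val < k.val}, xt k.1 (J k)) = 1 := by
      apply n2_eq_one_of
      have he : ∀ J : Gt n j0, (∏ k : {k : Fin d // j0.val < k.val}, xt k.1 (J k)) ^ 2
          = ∏ k : {k : Fin d // j0.val < k.val}, xt k.1 (J k) ^ 2 := fun J =>
        (Finset.prod_pow _ _ _).symm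
      simp_rw [he]
      have hps := Fintype.prod_sum (ι := {k : Fin d // j0.val < k.val})
        (κ := fun k => Fin (n k.1)) (f := fun k a => xt k.1 a ^ 2)
      rw [← hps]
      refine Finset.prod_eq_one fun k _ => ?_
      have hk := sq_n2 (xt k.1)
      rw [hxt k.1] at hk
      simpa using hk.symm
    have hval : ∑ J, A J * ∏ k, xt k (J k)
        = ∑ i, ∑ J : Gt n j0, xt j0 i * Mj A x j0 i J *
            (∏ k : {k : Fin d // j0.val < k.val}, xt k.1 (J k)) := by
      calc ∑ J, A J * ∏ k, xt k (J k)
          = ∑ I : Lt n j0, ∑ i, ∑ Jg : Gt n j0,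
              A (glue j0 I i Jg) * ∏ k, xt k (glue j0 I i Jg k) := sum_glue j0 _
        _ = ∑ i, ∑ Jg : Gt n j0,
              A (glue j0 default i Jg) * ∏ k, xt k (glue j0 default i Jg k) :=
            Fintype.sum_unique _
        _ = _ := by
            refine Finset.sum_congr rfl fun i _ => Finset.sum_congr rfl fun J _ => ?_
            rw [prod_glue, Fintype.prod_empty (fun k : {k : Fin d // k.val < j0.val} =>
              xt k.1 ((default : Lt n j0) k)), hMj0]
            ring
    rw [hval]
    exact hgr0.2 ⟨xt j0, fun J => ∏ k : {k : Fin d // j0.val < k.val}, xt k.1 (J k),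
      hxt j0, hw, rfl⟩
end
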